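/- arXiv:1101.2819 — 7 statements merged into one kernel-verified Lean document; each statement's English description precedes it below -/
import Mathlib

section
/- For every probabilistic labeled transition system L, every state s, and every action a: if s ⇒^a ν (the extended transition), then ν is a probability distribution over S_⊥, i.e. 0 ≤ ν(x) ≤ 1 for all x ∈ S_⊥ and Σ_{x∈S_⊥} ν(x) = 1. -/
open scoped Classical

/-- Restriction of a sequence of actions to a subset `E` of actions. -/
noncomputable def restrictList {A : Type*} (E : Set A) : List A → List A
  | [] => []
  | a :: l => if a ∈ E then a :: restrictList E l else restrictList E l

/-- `gammaSet E evec` is the set of action sequences whose restriction to `E` is `evec`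
and whose last element is the last element of `evec` (with `gammaSet E [] = {[]}`). -/
def gammaSet {A : Type*} (E : Set A) (evec : List A) : Set (List A) :=
  {avec | (evec = [] ∧ avec = []) ∨
    (evec ≠ [] ∧ restrictList E avec = evec ∧ avec.getLast? = evec.getLast?)}

/-- A probabilistic labeled transition system (data part): sets of data points,
queries, responses, and hidden outputs, together with a (deterministic) partial
transition function assigning to a state and an action a discrete distribution
over next states. -/
structure PLTS (S : Type*) (A : Type*) where
  dat : Set A
  qry : Set A
  resp : Set A
  hid : Set A
  trans : S → A → Option (S → ℝ)

namespace PLTS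

variable {S : Type*} {A : Type*}

def inp (L : PLTS S A) : Set A := L.dat ∪ L.qry
def out (L : PLTS S A) : Set A := L.resp ∪ L.hid
def obs (L : PLTS S A) : Set A := L.qry ∪ L.resp

/-- Well-formedness of a PLTS: the action sets are pairwise suitably disjoint,
every transition target is a discrete probability distribution, output determinism,
quasi-input enabling, and transitions only occur on actions of the system. -/
def WF (L : PLTS S A) : Prop :=
  Disjoint L.dat L.qry ∧ Disjoint L.resp L.hid ∧ Disjoint L.inp L.out ∧
  (∀ s a μ, L.trans s a = some μ → (∀ s', 0 ≤ μ s') ∧ (∑' s', μ s') = 1) ∧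
  (∀ s a o μ μ', o ∈ L.out → L.trans s o = some μ → L.trans s a = some μ' → a = o) ∧
  (∀ s i₁ i₂ μ₁, i₁ ∈ L.inp → i₂ ∈ L.inp → L.trans s i₁ = some μ₁ → ∃ μ₂, L.trans s i₂ = some μ₂) ∧
  (∀ s a μ, L.trans s a = some μ → a ∈ L.inp ∪ L.out)

/-- The trace probability `⟨L,s⟩(i⃗)(a⃗,s')`: probability that, with available inputs
`ivec`, the automaton started at `s` produces the action sequence `avec` and is in
state `s'` after the last action.  (First argument is the action sequence.) -/
noncomputable def traceProb (L : PLTS S A) : List A → S → List A → S → ℝ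
  | [], s, _, s' => if s' = s then 1 else 0
  | a :: avec, s, ivec, s' =>
    if a ∈ L.inp then
      match ivec with
      | [] => 0
      | i :: ivec' =>
        if i = a then
          match L.trans s a with
          | some μ => ∑' s'' : S, μ s'' * L.traceProb avec s'' ivec' s'
          | none => 0
        else 0
    else
      match L.trans s a with
      | some μ => ∑' s'' : S, μ s'' * L.traceProb avec s'' ivec s'
      | none => 0

/-- `Pr[⟦⟨L,s⟩⟧(i⃗) ⊒ a⃗]`. -/
noncomputable def prefixProb (L : PLTS S A) (s : S) (ivec avec : List A) : ℝ :=
  ∑' s' : S, L.traceProb avec s ivec s'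

/-- `γ(e⃗)` for the observable actions of `L`. -/
def gamma (L : PLTS S A) (evec : List A) : Set (List A) :=
  gammaSet L.obs evec

/-- `Pr[⟦⟨L,s⟩⟧(i⃗)↾E ⊒ e⃗]`. -/
noncomputable def obsProb (L : PLTS S A) (s : S) (ivec evec : List A) : ℝ :=
  ∑' avec : L.gamma evec, L.prefixProb s ivec avec.1

/-- A state is `H`-disabled if it enables no hidden output. -/
def HDisabled (L : PLTS S A) (s : S) : Prop := ∀ h ∈ L.hid, L.trans s h = none

/-- Sequences of hidden actions. -/
def HSeq (L : PLTS S A) : Set (List A) := {l | ∀ x ∈ l, x ∈ L.hid}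

/-- The state part of the extended-transition distribution obtained from `μ`. -/
noncomputable def extDistState (L : PLTS S A) (μ : S → ℝ) (s' : S) : ℝ :=
  if L.HDisabled s' then ∑' s'' : S, μ s'' * ∑' hl : L.HSeq, L.traceProb hl.1 s'' [] s' else 0

/-- The extended-transition distribution over `S_⊥ = Option S` obtained from `μ`. -/
noncomputable def extDist (L : PLTS S A) (μ : S → ℝ) : Option S → ℝ
  | some s' => L.extDistState μ s'
  | none => 1 - ∑' s' : S, L.extDistState μ s'

/-- The extended transition `s ⇒^a ν`. -/
def ExtTrans (L : PLTS S A) (s : S) (a : A) (ν : Option S → ℝ) : Prop :=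
  ∃ μ, L.trans s a = some μ ∧ ν = L.extDist μ

/-- The extended transition from an element of `S_⊥` (⊥ has no transitions). -/
def ExtTransX (L : PLTS S A) (x : Option S) (a : A) (ν : Option S → ℝ) : Prop :=
  ∃ s, x = some s ∧ L.ExtTrans s a ν

/-- Observable prefix probability from an element of `S_⊥`. -/
noncomputable def obsProbX (L : PLTS S A) (x : Option S) (ivec evec : List A) : ℝ :=
  match x with
  | some s => L.obsProb s ivec evec
  | none => if evec = [] then 1 else 0

end PLTS

/-- The elements of `T` having no strict prefix in `T`. -/
def minimalPrefixes {X : Type*} (T : Set (List X)) : Set (List X) :=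
  {e | e ∈ T ∧ ¬ ∃ e' ∈ T, e' <+: e ∧ e' ≠ e}

namespace PLTS

variable {S : Type*} {A : Type*}

/-- `Pr[⟦M⟧(i⃗)↾E ⊒ T]` for a set `T` of observable sequences. -/
noncomputable def obsSetProb (L : PLTS S A) (s : S) (ivec : List A) (T : Set (List A)) : ℝ :=
  ∑' e : minimalPrefixes T, L.obsProb s ivec e.1

/-- `Δ(i⃗₁,i⃗₂) ≤ 1`: the two input sequences are equal or one is obtained from the
other by the insertion of a single data point. -/
def AdjOne (L : PLTS S A) (i₁ i₂ : List A) : Prop :=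
  i₁ = i₂ ∨ ∃ (pre post : List A) (d : A), d ∈ L.dat ∧
    ((i₁ = pre ++ d :: post ∧ i₂ = pre ++ post) ∨ (i₂ = pre ++ d :: post ∧ i₁ = pre ++ post))

/-- `Δ(i⃗₁,i⃗₂) ≤ n`. -/
def DeltaLe (L : PLTS S A) : ℕ → List A → List A → Prop
  | 0, i₁, i₂ => i₁ = i₂
  | n + 1, i₁, i₂ => i₁ = i₂ ∨ ∃ (pre post₁ post₂ : List A) (d : A), d ∈ L.dat ∧
      (((i₁ = pre ++ d :: post₁ ∧ i₂ = pre ++ post₂) ∨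
        (i₂ = pre ++ d :: post₂ ∧ i₁ = pre ++ post₁)) ∧ L.DeltaLe n post₁ post₂)

/-- `ε`-differential noninterference of the automaton `⟨L, s₀⟩`. -/
def DiffNI (L : PLTS S A) (s₀ : S) (ε : ℝ) : Prop :=
  ∀ i₁ i₂ : List A, (∀ a ∈ i₁, a ∈ L.inp) → (∀ a ∈ i₂, a ∈ L.inp) → L.AdjOne i₁ i₂ →
    ∀ T : Set (List A), (∀ e ∈ T, ∀ a ∈ e, a ∈ L.obs) →
      L.obsSetProb s₀ i₁ T ≤ Real.exp ε * L.obsSetProb s₀ i₂ T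

/-- A state is reachable from `s₀` if some trace reaches it with positive probability. -/
def Reachable (L : PLTS S A) (s₀ s : S) : Prop :=
  ∃ ivec avec, 0 < L.traceProb avec s₀ ivec s

/-- `HDisabled` extended to `S_⊥`. -/
def HDisabledX (L : PLTS S A) : Option S → Prop
  | some s => L.HDisabled s
  | none => True

end PLTS

/-- `δ`-approximate lifting of a relation `R` to distributions. -/
def ApproxLift {X : Type*} (R : X → X → Prop) (δ : ℝ) (ν₁ ν₂ : X → ℝ) : Prop :=
  ∃ β : {x : X // 0 < ν₁ x} → {x : X // 0 < ν₂ x}, Function.Bijective β ∧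
    ∀ x : {x : X // 0 < ν₁ x},
      R x.1 (β x).1 ∧ |Real.log (ν₁ x.1) - Real.log (ν₂ (β x).1)| ≤ δ

namespace PLTS

variable {S : Type*} {A : Type*}

/-- An `ε`-unwinding family for `L`: a family of relations over the `H`-disabled
states of `L` (extended to `S_⊥`), indexed by `[0,ε]`, satisfying the unwinding
conditions. -/
def IsUnwindingFamily (L : PLTS S A) (ε : ℝ) (R : ℝ → Option S → Option S → Prop) : Prop :=
  0 ≤ ε ∧
  (∀ ε', 0 ≤ ε' → ε' ≤ ε → ∀ x₁ x₂, R ε' x₁ x₂ → L.HDisabledX x₁ ∧ L.HDisabledX x₂) ∧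
  (∀ ε', 0 ≤ ε' → ε' ≤ ε → ∀ x₁ x₂, R ε' x₁ x₂ → ∀ a, a ∈ L.inp ∪ L.resp →
    (((∃ ν₁, L.ExtTransX x₁ a ν₁) ↔ (∃ ν₂, L.ExtTransX x₂ a ν₂)) ∧
     (∀ ν₁ ν₂, L.ExtTransX x₁ a ν₁ → L.ExtTransX x₂ a ν₂ →
       ∃ δ, 0 ≤ δ ∧ δ ≤ ε' ∧ ApproxLift (R (ε' - δ)) δ ν₁ ν₂)))

/-- The family `R` covers state `s` and data point `d`. -/
def Covers (L : PLTS S A) (ε : ℝ) (R : ℝ → Option S → Option S → Prop) (s : S) (d : A) : Prop :=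
  ∀ ν, L.ExtTrans s d ν → ν none = 0 ∧ ∀ s', 0 < ν (some s') → R ε (some s) (some s')

end PLTS

/-!
On `S`, the extended distribution is `μ` pushed through the kernel `K s'' s'`, the total
probability of the runs of hidden outputs from `s''` that stop in the `H`-disabled state `s'`.
This kernel is sub-Markov: a run stops exactly when it meets an `H`-disabled state, and by
output determinism an `H`-enabled state has a single hidden output, so the runs from a state
branch only through the random choices of its successors, and any finite set of them carries
mass at most `1`. Hence the mass on `S` is at most `1`, and `⊥` receives the remainder.
-/

lemma hasSum_option_of_hasSum_some {α : Type*} {f : Option α → ℝ} {a : ℝ}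
    (h : HasSum (fun x => f (some x)) a) : HasSum f (a + f none) := by
  rw [← (Equiv.optionEquivSumPUnit.{0} α).symm.hasSum_iff]
  exact h.sum (hasSum_unique _)

lemma mem_Icc_and_tsum_eq_one_of_none_eq_one_sub {α : Type*} {f : Option α → ℝ}
    (h0 : ∀ x, 0 ≤ f (some x)) (hs : Summable fun x => f (some x))
    (h1 : ∑' x, f (some x) ≤ 1) (hnone : f none = 1 - ∑' x, f (some x)) :
    (∀ x, 0 ≤ f x ∧ f x ≤ 1) ∧ ∑' x, f x = 1 := by
  refine ⟨fun x => ?_, ?_⟩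
  · cases x with
    | none => constructor <;> linarith [(tsum_nonneg h0 : 0 ≤ ∑' x, f (some x))]
    | some x => exact ⟨h0 x, (hs.le_tsum x fun y _ => h0 y).trans h1⟩
  · rw [(hasSum_option_of_hasSum_some hs.hasSum).tsum_eq, hnone]
    ring

lemma summable_mul_kernel {X Y : Type*} {μ : X → ℝ} {K : X → Y → ℝ} (hμ0 : ∀ x, 0 ≤ μ x)
    (hμ : Summable μ) (hK0 : ∀ x y, 0 ≤ K x y) (hK : ∀ x, Summable (K x))
    (hK1 : ∀ x, ∑' y, K x y ≤ 1) :
    Summable fun p : X × Y => μ p.1 * K p.1 p.2 := by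
  have hnonneg : (0 : X × Y → ℝ) ≤ fun p => μ p.1 * K p.1 p.2 :=
    fun p => mul_nonneg (hμ0 p.1) (hK0 p.1 p.2)
  refine (summable_prod_of_nonneg hnonneg).2 ⟨fun x => (hK x).mul_left (μ x), ?_⟩
  refine hμ.of_nonneg_of_le (fun x => tsum_nonneg fun y => mul_nonneg (hμ0 x) (hK0 x y))
    fun x => ?_
  simp only [(hK x).tsum_mul_left]
  exact mul_le_of_le_one_right (hμ0 x) (hK1 x)

lemma tsum_tsum_mul_kernel_le {X Y : Type*} {μ : X → ℝ} {K : X → Y → ℝ} (hμ0 : ∀ x, 0 ≤ μ x)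
    (hμ : Summable μ) (hK0 : ∀ x y, 0 ≤ K x y) (hK : ∀ x, Summable (K x))
    (hK1 : ∀ x, ∑' y, K x y ≤ 1) :
    ∑' y, ∑' x, μ x * K x y ≤ ∑' x, μ x := by
  have hsum := summable_mul_kernel hμ0 hμ hK0 hK hK1
  rw [Summable.tsum_comm (f := fun x y => μ x * K x y) hsum]
  refine hsum.prod.tsum_le_tsum (fun x => ?_) hμ
  rw [(hK x).tsum_mul_left]
  exact mul_le_of_le_one_right (hμ0 x) (hK1 x)

lemma sum_tsum_mul_le_one {X ι : Type*} {μ : X → ℝ} {g : ι → X → ℝ} {u : Finset ι}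
    (hμ0 : ∀ x, 0 ≤ μ x) (hμ : HasSum μ 1) (hg0 : ∀ q ∈ u, ∀ x, 0 ≤ g q x)
    (hg1 : ∀ x, ∑ q ∈ u, g q x ≤ 1) :
    ∑ q ∈ u, ∑' x, μ x * g q x ≤ 1 := by
  have hterm : ∀ q ∈ u, HasSum (fun x => μ x * g q x) (∑' x, μ x * g q x) := fun q hq =>
    (hμ.summable.of_nonneg_of_le (fun x => mul_nonneg (hμ0 x) (hg0 q hq x))
      fun x => mul_le_of_le_one_right (hμ0 x)
        ((Finset.single_le_sum (fun q hq => hg0 q hq x) hq).trans (hg1 x))).hasSum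
  refine hasSum_le (fun x => ?_) (hasSum_sum hterm) hμ
  rw [← Finset.mul_sum]
  exact mul_le_of_le_one_right (hμ0 x) (hg1 x)

namespace PLTS

variable {S A : Type*} {L : PLTS S A}

namespace WF

lemma trans_nonneg (hWF : L.WF) {s : S} {a : A} {μ : S → ℝ} (h : L.trans s a = some μ)
    (t : S) : 0 ≤ μ t :=
  (hWF.2.2.2.1 s a μ h).1 t

lemma hasSum_trans (hWF : L.WF) {s : S} {a : A} {μ : S → ℝ} (h : L.trans s a = some μ) :
    HasSum μ 1 := by
  obtain ⟨-, h1⟩ := hWF.2.2.2.1 s a μ h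
  have hμ : Summable μ := by
    by_contra hμ
    simp [tsum_eq_zero_of_not_summable hμ] at h1
  exact h1 ▸ hμ.hasSum

lemma notMem_inp_of_mem_hid (hWF : L.WF) {h : A} (hh : h ∈ L.hid) : h ∉ L.inp :=
  fun hi => Set.disjoint_left.mp hWF.2.2.1 hi (Or.inr hh)

lemma trans_eq_none_of_ne_out (hWF : L.WF) {s : S} {o a : A} {μ : S → ℝ} (ho : o ∈ L.out)
    (hμ : L.trans s o = some μ) (hne : a ≠ o) : L.trans s a = none := by
  by_contra h
  obtain ⟨μ', hμ'⟩ := Option.ne_none_iff_exists'.mp h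
  exact hne (hWF.2.2.2.2.1 s a o μ μ' ho hμ hμ')

end WF

lemma traceProb_cons_of_trans_eq_none {s s' : S} {a : A} (h : L.trans s a = none)
    (avec ivec : List A) : L.traceProb (a :: avec) s ivec s' = 0 := by
  simp only [traceProb, h]
  split <;> (try split) <;> (try split) <;> rfl

lemma traceProb_cons_of_notMem_inp {s s' : S} {a : A} {μ : S → ℝ} (ha : a ∉ L.inp)
    (h : L.trans s a = some μ) (avec ivec : List A) :
    L.traceProb (a :: avec) s ivec s' = ∑' t, μ t * L.traceProb avec t ivec s' := by
  simp only [traceProb, ha, if_false, h]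

lemma traceProb_nonneg (hWF : L.WF) (avec : List A) (s : S) (ivec : List A) (s' : S) :
    0 ≤ L.traceProb avec s ivec s' := by
  induction avec generalizing s ivec with
  | nil =>
    simp only [traceProb]
    split <;> norm_num
  | cons a avec ih =>
    simp only [traceProb]
    split_ifs <;> (try split) <;> (try split) <;> (try split) <;>
      first
      | exact le_rfl
      | exact tsum_nonneg fun t => mul_nonneg (hWF.trans_nonneg ‹_› t) (ih _ _)

noncomputable def hiddenReach (L : PLTS S A) (s : S) (p : S × List A) : ℝ :=
  if p.2 ∈ L.HSeq ∧ L.HDisabled p.1 then L.traceProb p.2 s [] p.1 else 0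

lemma hiddenReach_nonneg (hWF : L.WF) (s : S) (p : S × List A) : 0 ≤ L.hiddenReach s p := by
  unfold hiddenReach
  split
  · exact traceProb_nonneg hWF _ _ _ _
  · exact le_rfl

lemma hiddenReach_of_hDisabled {s : S} (hs : L.HDisabled s) (p : S × List A) :
    L.hiddenReach s p = if p = (s, []) then 1 else 0 := by
  obtain ⟨t, l⟩ := p
  cases l with
  | nil =>
    by_cases ht : t = s
    · subst ht
      simp [hiddenReach, HSeq, hs, traceProb]
    · simp [hiddenReach, traceProb, ht]
  | cons a l =>
    simp only [hiddenReach, Prod.mk.injEq, reduceCtorEq, and_false, if_false]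
    split_ifs with hl
    · exact traceProb_cons_of_trans_eq_none (hs a (hl.1 a List.mem_cons_self)) _ _
    · rfl

lemma hiddenReach_cons (hWF : L.WF) {s t : S} {h : A} {μ : S → ℝ} (hh : h ∈ L.hid)
    (hμ : L.trans s h = some μ) (l : List A) :
    L.hiddenReach s (t, h :: l) = ∑' x, μ x * L.hiddenReach x (t, l) := by
  have hseq : h :: l ∈ L.HSeq ↔ l ∈ L.HSeq := by simp [HSeq, hh]
  simp only [hiddenReach, hseq]
  split_ifs
  · exact traceProb_cons_of_notMem_inp (hWF.notMem_inp_of_mem_hid hh) hμ _ _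
  · simp

lemma hiddenReach_eq_zero_of_ne_cons (hWF : L.WF) {s t : S} {h : A} {μ : S → ℝ}
    (hh : h ∈ L.hid) (hμ : L.trans s h = some μ) {l : List A} (hl : ∀ l', l ≠ h :: l') :
    L.hiddenReach s (t, l) = 0 := by
  unfold hiddenReach
  split_ifs with hp
  · cases l with
    | nil =>
      have hts : t ≠ s := by
        rintro rfl
        simp [hp.2 h hh] at hμ
      simp [traceProb, hts]
    | cons a l =>
      have hne : a ≠ h := fun hah => hl l (hah ▸ rfl)
      exact traceProb_cons_of_trans_eq_none (hWF.trans_eq_none_of_ne_out (Or.inr hh) hμ hne) _ _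
  · rfl

lemma sum_hiddenReach_le_one (hWF : L.WF) (s : S) (u : Finset (S × List A)) :
    ∑ p ∈ u, L.hiddenReach s p ≤ 1 := by
  suffices ∀ n s (u : Finset (S × List A)), (∀ p ∈ u, p.2.length < n) →
      ∑ p ∈ u, L.hiddenReach s p ≤ 1 from
    this (u.sup fun p => p.2.length + 1) s u fun p hp =>
      Nat.lt_of_succ_le (Finset.le_sup (f := fun p => p.2.length + 1) hp)
  intro n
  induction n with
  | zero =>
    intro s u hu
    rw [Finset.sum_eq_zero fun p hp => absurd (hu p hp) (Nat.not_lt_zero _)]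
    exact zero_le_one
  | succ n ih =>
    intro s u hu
    by_cases hs : L.HDisabled s
    · simp only [hiddenReach_of_hDisabled hs, Finset.sum_ite_eq']
      split <;> norm_num
    obtain ⟨h, hh, hμ⟩ : ∃ h ∈ L.hid, L.trans s h ≠ none := by
      simpa [HDisabled] using hs
    obtain ⟨μ, hμ⟩ := Option.ne_none_iff_exists'.mp hμ
    let consH : S × List A → S × List A := fun q => (q.1, h :: q.2)
    have hinj : Set.InjOn consH (consH ⁻¹' u) := fun q _ q' _ hq => by
      simp only [consH, Prod.mk.injEq, List.cons.injEq, true_and] at hq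
      exact Prod.ext hq.1 hq.2
    let u' := u.preimage consH hinj
    have hu' : ∀ q ∈ u', q.2.length < n := fun q hq => by
      simpa [consH] using hu _ (Finset.mem_preimage.mp hq)
    have hsplit : ∑ p ∈ u, L.hiddenReach s p = ∑ q ∈ u', ∑' x, μ x * L.hiddenReach x q := by
      rw [← Finset.sum_preimage consH u hinj]
      · exact Finset.sum_congr rfl fun q _ => hiddenReach_cons hWF hh hμ q.2
      · rintro ⟨t, l⟩ _ hp
        exact hiddenReach_eq_zero_of_ne_cons hWF hh hμ fun l' hl => hp ⟨(t, l'), hl ▸ rfl⟩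
    rw [hsplit]
    exact sum_tsum_mul_le_one (hWF.trans_nonneg hμ) (hWF.hasSum_trans hμ)
      (fun q _ x => hiddenReach_nonneg hWF x q) fun x => ih x u' hu'

lemma summable_hiddenReach (hWF : L.WF) (s : S) : Summable (L.hiddenReach s) :=
  summable_of_sum_le (hiddenReach_nonneg hWF s) (sum_hiddenReach_le_one hWF s)

noncomputable def hiddenKernel (L : PLTS S A) (s t : S) : ℝ :=
  ∑' l, L.hiddenReach s (t, l)

lemma hiddenKernel_nonneg (hWF : L.WF) (s t : S) : 0 ≤ L.hiddenKernel s t :=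
  tsum_nonneg fun l => hiddenReach_nonneg hWF s (t, l)

lemma summable_hiddenKernel (hWF : L.WF) (s : S) : Summable (L.hiddenKernel s) :=
  (summable_hiddenReach hWF s).prod

lemma tsum_hiddenKernel_le_one (hWF : L.WF) (s : S) : ∑' t, L.hiddenKernel s t ≤ 1 := by
  simp only [hiddenKernel]
  rw [← (summable_hiddenReach hWF s).tsum_prod]
  exact Real.tsum_le_of_sum_le (hiddenReach_nonneg hWF s) (sum_hiddenReach_le_one hWF s)

lemma extDistState_eq_tsum_hiddenKernel (μ : S → ℝ) (t : S) :
    L.extDistState μ t = ∑' x, μ x * L.hiddenKernel x t := by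
  unfold extDistState hiddenKernel hiddenReach
  by_cases ht : L.HDisabled t
  · simp only [ht, if_true, and_true]
    refine tsum_congr fun x => ?_
    rw [tsum_subtype L.HSeq fun l => L.traceProb l x [] t]
    rfl
  · simp [ht]

lemma extDistState_nonneg (hWF : L.WF) {μ : S → ℝ} (hμ0 : ∀ x, 0 ≤ μ x) (t : S) :
    0 ≤ L.extDistState μ t := by
  rw [extDistState_eq_tsum_hiddenKernel]
  exact tsum_nonneg fun x => mul_nonneg (hμ0 x) (hiddenKernel_nonneg hWF x t)

lemma summable_extDistState (hWF : L.WF) {μ : S → ℝ} (hμ0 : ∀ x, 0 ≤ μ x) (hμ : Summable μ) :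
    Summable (L.extDistState μ) := by
  simp only [funext (extDistState_eq_tsum_hiddenKernel (L := L) μ)]
  exact (summable_mul_kernel hμ0 hμ (hiddenKernel_nonneg hWF) (summable_hiddenKernel hWF)
    (tsum_hiddenKernel_le_one hWF)).prod_symm.prod

lemma tsum_extDistState_le_one (hWF : L.WF) {μ : S → ℝ} (hμ0 : ∀ x, 0 ≤ μ x)
    (hμ : HasSum μ 1) : ∑' t, L.extDistState μ t ≤ 1 := by
  simp only [extDistState_eq_tsum_hiddenKernel]
  exact hμ.tsum_eq ▸ tsum_tsum_mul_kernel_le hμ0 hμ.summable (hiddenKernel_nonneg hWF)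
    (summable_hiddenKernel hWF) (tsum_hiddenKernel_le_one hWF)

end PLTS

section Statements

open PLTS

variable {S : Type} {A : Type}

theorem stmt2_general (L : PLTS S A) (hWF : L.WF)
    (s : S) (a : A) (ν : Option S → ℝ) (h : L.ExtTrans s a ν) :
    (∀ x : Option S, 0 ≤ ν x ∧ ν x ≤ 1) ∧ (∑' x : Option S, ν x) = 1 := by
  obtain ⟨μ, hμ, rfl⟩ := h
  have hμ0 := hWF.trans_nonneg hμ
  exact mem_Icc_and_tsum_eq_one_of_none_eq_one_sub (extDistState_nonneg hWF hμ0)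
    (summable_extDistState hWF hμ0 (hWF.hasSum_trans hμ).summable)
    (tsum_extDistState_le_one hWF hμ0 (hWF.hasSum_trans hμ)) rfl

theorem stmt2 [Countable S] [Countable A] (L : PLTS S A) (hWF : L.WF)
    (s : S) (a : A) (ν : Option S → ℝ) (h : L.ExtTrans s a ν) :
    (∀ x : Option S, 0 ≤ ν x ∧ ν x ≤ 1) ∧ (∑' x : Option S, ν x) = 1 :=
  stmt2_general L hWF s a ν h

end Statements
end

section
/- Let A be a countable set of actions with disjoint subsets E and H. For e⃗ ∈ E* with e⃗ ≠ [], the set H*:γ'(e⃗) equals γ(e⃗), where γ(e⃗) = { a⃗ ∈ A* : the restriction of a⃗ to E equals e⃗ and the last element of a⃗ equals the last element of e⃗ }, γ'(e⃗) = { a⃗ ∈ γ(e⃗) : a⃗ = [] or the first element of a⃗ is not in H }, and H*:X = { h⃗ ++ a⃗ : h⃗ ∈ H*, a⃗ ∈ X }. -/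
open scoped Classical

/-!
Split a sequence as its longest prefix of hidden outputs followed by a sequence not starting
with one. Hidden outputs lie outside `E`, so prepending them changes neither the restriction to
`E` nor, since `e⃗ ≠ []` forces the suffix to be nonempty, the last element.
-/

section GammaSet

variable {A : Type*}

theorem restrictList_append (E : Set A) (l₁ l₂ : List A) :
    restrictList E (l₁ ++ l₂) = restrictList E l₁ ++ restrictList E l₂ := by
  induction l₁ with
  | nil => rfl
  | cons a l ih =>
    by_cases ha : a ∈ E <;> simp [restrictList, ha, ih]

theorem restrictList_eq_nil_of_forall_not_mem {E : Set A} {l : List A}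
    (h : ∀ x ∈ l, x ∉ E) : restrictList E l = [] := by
  induction l with
  | nil => rfl
  | cons a l ih =>
    simp only [List.mem_cons, forall_eq_or_imp] at h
    simp [restrictList, h.1, ih h.2]

theorem ne_nil_of_restrictList_ne_nil {E : Set A} {l : List A}
    (h : restrictList E l ≠ []) : l ≠ [] := by
  rintro rfl
  exact h rfl

theorem mem_gammaSet_iff_of_ne_nil {E : Set A} {evec l : List A} (hne : evec ≠ []) :
    l ∈ gammaSet E evec ↔ restrictList E l = evec ∧ l.getLast? = evec.getLast? := by
  simp [gammaSet, hne]

theorem append_mem_gammaSet_iff {E : Set A} {evec hv avec : List A} (hne : evec ≠ [])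
    (hv_not_mem : ∀ x ∈ hv, x ∉ E) :
    hv ++ avec ∈ gammaSet E evec ↔ avec ∈ gammaSet E evec := by
  rw [mem_gammaSet_iff_of_ne_nil hne, mem_gammaSet_iff_of_ne_nil hne, restrictList_append,
    restrictList_eq_nil_of_forall_not_mem hv_not_mem, List.nil_append]
  refine and_congr_right fun hres => ?_
  have havec : avec ≠ [] := ne_nil_of_restrictList_ne_nil (hres ▸ hne)
  rw [List.getLast?_append_of_ne_nil hv havec]

end GammaSet

theorem List.exists_eq_append_forall_mem_head_not_mem {A : Type*} (H : Set A) (l : List A) :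
    ∃ l₁ l₂ : List A, (∀ x ∈ l₁, x ∈ H) ∧
      (l₂ = [] ∨ ∃ (a : A) (l' : List A), l₂ = a :: l' ∧ a ∉ H) ∧
      l = l₁ ++ l₂ := by
  refine ⟨l.takeWhile (· ∈ H), l.dropWhile (· ∈ H), fun x hx => ?_, ?_,
    List.takeWhile_append_dropWhile.symm⟩
  · simpa using List.mem_takeWhile_imp hx
  · rcases hdrop : l.dropWhile (· ∈ H) with _ | ⟨a, l'⟩
    · exact Or.inl rfl
    · have := List.head_dropWhile_not (· ∈ H) (l := l) (by simp [hdrop])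
      simp only [hdrop, List.head_cons, decide_eq_false_iff_not] at this
      exact Or.inr ⟨a, l', rfl, this⟩

section Statements

open PLTS

variable {S : Type} {A : Type}

theorem stmt4_general (E H : Set A) (hdisj : Disjoint E H)
    (evec : List A) (hne : evec ≠ []) :
    {l : List A | ∃ hv : List A, (∀ x ∈ hv, x ∈ H) ∧
        ∃ avec ∈ gammaSet E evec,
          (avec = [] ∨ ∃ (a : A) (avec' : List A), avec = a :: avec' ∧ a ∉ H) ∧
          l = hv ++ avec}
      = gammaSet E evec := by
  have not_mem_E {hv : List A} (hH : ∀ x ∈ hv, x ∈ H) : ∀ x ∈ hv, x ∉ E :=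
    fun x hx => Set.disjoint_right.1 hdisj (hH x hx)
  ext l
  constructor
  · rintro ⟨hv, hH, avec, havec, -, rfl⟩
    exact (append_mem_gammaSet_iff hne (not_mem_E hH)).2 havec
  · intro hl
    obtain ⟨hv, avec, hH, hhead, rfl⟩ := List.exists_eq_append_forall_mem_head_not_mem H l
    exact ⟨hv, hH, avec, (append_mem_gammaSet_iff hne (not_mem_E hH)).1 hl, hhead, rfl⟩

theorem stmt4 [Countable A] (E H : Set A) (hdisj : Disjoint E H)
    (evec : List A) (hE : ∀ e ∈ evec, e ∈ E) (hne : evec ≠ []) :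
    {l : List A | ∃ hv : List A, (∀ x ∈ hv, x ∈ H) ∧
        ∃ avec ∈ gammaSet E evec,
          (avec = [] ∨ ∃ (a : A) (avec' : List A), avec = a :: avec' ∧ a ∉ H) ∧
          l = hv ++ avec}
      = gammaSet E evec :=
  stmt4_general E H hdisj evec hne

end Statements
end

section
/- An automaton M = ⟨L, s₀⟩ has ε-differential noninterference if and only if for all input sequences i⃗₁, i⃗₂ ∈ I* with Δ(i⃗₁,i⃗₂) ≤ 1 and all single observable sequences e⃗ ∈ E*: Pr[⟦M⟧(i⃗₁)↾E ⊒ e⃗] ≤ e^ε · Pr[⟦M⟧(i⃗₂)↾E ⊒ e⃗]. -/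
open scoped Classical

/-!
The forward direction is the case `T = {e⃗}`. Conversely, `Pr[⟦M⟧(i⃗)↾E ⊒ T]` is a sum of
`Pr[⟦M⟧(i⃗)↾E ⊒ e⃗]` over the prefix-free set of minimal elements of `T`, so the pointwise
bound can be summed once the right-hand series is known to converge. It does: for prefix-free
observable sequences the sets `γ(e⃗)` are pairwise disjoint with prefix-free union, and the
prefix probabilities of any prefix-free set of action sequences sum to at most `1`. The last
fact is proved by induction on the length: by transition and output determinism, all sequences
of positive probability start with the same action, so stripping it expresses the sum as an
average, over the successor distribution, of sums of the same kind.
-/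

structure IsSubDist {X : Type*} (ν : X → ℝ) : Prop where
  nonneg : ∀ x, 0 ≤ ν x
  summable : Summable ν
  tsum_le_one : ∑' x, ν x ≤ 1

namespace IsSubDist

variable {ι κ : Type*} {μ : ι → ℝ}

theorem of_tsum_eq_one (hμ0 : ∀ i, 0 ≤ μ i) (hμ1 : ∑' i, μ i = 1) : IsSubDist μ where
  nonneg := hμ0
  summable := by
    by_contra h
    rw [tsum_eq_zero_of_not_summable h] at hμ1
    exact zero_ne_one hμ1
  tsum_le_one := hμ1.le

theorem summable_mul (hμ : IsSubDist μ) {g : ι → ℝ} (hg0 : ∀ i, 0 ≤ g i) (hg1 : ∀ i, g i ≤ 1) :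
    Summable fun i => μ i * g i :=
  hμ.summable.of_nonneg_of_le (fun i => mul_nonneg (hμ.nonneg i) (hg0 i))
    fun i => mul_le_of_le_one_right (hμ.nonneg i) (hg1 i)

theorem tsum_mul_le_one (hμ : IsSubDist μ) {g : ι → ℝ} (hg0 : ∀ i, 0 ≤ g i)
    (hg1 : ∀ i, g i ≤ 1) : ∑' i, μ i * g i ≤ 1 :=
  ((hμ.summable_mul hg0 hg1).tsum_le_tsum (fun i => mul_le_of_le_one_right (hμ.nonneg i) (hg1 i))
    hμ.summable).trans hμ.tsum_le_one

theorem summable_uncurry_mul (hμ : IsSubDist μ) {f : ι → κ → ℝ} (hf : ∀ i, IsSubDist (f i)) :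
    Summable (Function.uncurry fun i y => μ i * f i y) := by
  refine (summable_prod_of_nonneg fun p => mul_nonneg (hμ.nonneg _) ((hf _).nonneg _)).2
    ⟨fun i => (hf i).summable.mul_left (μ i), ?_⟩
  simp only [tsum_mul_left]
  exact hμ.summable_mul (fun i => tsum_nonneg (hf i).nonneg) fun i => (hf i).tsum_le_one

theorem tsum_mixture (hμ : IsSubDist μ) {f : ι → κ → ℝ} (hf : ∀ i, IsSubDist (f i)) :
    ∑' y, ∑' i, μ i * f i y = ∑' i, μ i * ∑' y, f i y := by
  rw [(hμ.summable_uncurry_mul hf).tsum_comm]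
  exact tsum_congr fun i => tsum_mul_left

theorem mixture (hμ : IsSubDist μ) {f : ι → κ → ℝ} (hf : ∀ i, IsSubDist (f i)) :
    IsSubDist fun y => ∑' i, μ i * f i y where
  nonneg y := tsum_nonneg fun i => mul_nonneg (hμ.nonneg i) ((hf i).nonneg y)
  summable := ((summable_prod_of_nonneg fun p => mul_nonneg (hμ.nonneg _) ((hf _).nonneg _)).1
    (hμ.summable_uncurry_mul hf).prod_symm).2
  tsum_le_one := by
    rw [hμ.tsum_mixture hf]
    exact hμ.tsum_mul_le_one (fun i => tsum_nonneg (hf i).nonneg) fun i => (hf i).tsum_le_one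

end IsSubDist

theorem restrictList_eq_filter {A : Type*} (E : Set A) (l : List A) :
    restrictList E l = l.filter (fun a => decide (a ∈ E)) := by
  induction l with
  | nil => rfl
  | cons a l ih => by_cases h : a ∈ E <;> simp [restrictList, h, ih]

section gammaSet

variable {A : Type*} {E : Set A} {e e₁ e₂ a a₁ a₂ : List A}

theorem restrictList_eq_of_mem_gammaSet (h : a ∈ gammaSet E e) : restrictList E a = e := by
  rcases h with ⟨rfl, rfl⟩ | ⟨-, h, -⟩
  · rfl
  · exact h

theorem getLast?_mem_of_mem_gammaSet (h : a ∈ gammaSet E e) : ∀ x ∈ a.getLast?, x ∈ E := by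
  rcases h with ⟨-, rfl⟩ | ⟨-, hr, hl⟩
  · simp
  · intro x hx
    rw [hl, ← hr] at hx
    have := List.mem_of_getLast? hx
    rw [restrictList_eq_filter, List.mem_filter] at this
    simpa using this.2

theorem eq_of_mem_gammaSet (h₁ : a ∈ gammaSet E e₁) (h₂ : a ∈ gammaSet E e₂) : e₁ = e₂ :=
  (restrictList_eq_of_mem_gammaSet h₁).symm.trans (restrictList_eq_of_mem_gammaSet h₂)

/-- A proper extension of a sequence in `γ(e₁)` only adds unobservable actions after the last
observable one of `e₁`, so it cannot end in an observable action. -/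
theorem eq_of_isPrefix_of_mem_gammaSet (he : e₁ <+: e₂ → e₁ = e₂) (h₁ : a₁ ∈ gammaSet E e₁)
    (h₂ : a₂ ∈ gammaSet E e₂) (ha : a₁ <+: a₂) : a₁ = a₂ := by
  obtain ⟨t, rfl⟩ := ha
  have hr := restrictList_eq_of_mem_gammaSet h₂
  rw [restrictList_eq_filter, List.filter_append, ← restrictList_eq_filter,
    restrictList_eq_of_mem_gammaSet h₁] at hr
  obtain rfl := he ⟨_, hr⟩
  have ht : ∀ x ∈ t, x ∉ E := by
    have := List.append_right_eq_self.1 hr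
    simpa [List.filter_eq_nil_iff] using this
  rcases List.eq_nil_or_concat' t with rfl | ⟨t', x, rfl⟩
  · simp
  · exact absurd (getLast?_mem_of_mem_gammaSet h₂ x (by simp)) (ht x (by simp))

end gammaSet

namespace PLTS

variable {S A : Type*} {L : PLTS S A}

theorem WF.isSubDist_of_trans (hWF : L.WF) {s : S} {a : A} {μ : S → ℝ}
    (h : L.trans s a = some μ) : IsSubDist μ :=
  IsSubDist.of_tsum_eq_one (hWF.2.2.2.1 s a μ h).1 (hWF.2.2.2.1 s a μ h).2

theorem WF.eq_of_trans_of_mem_out (hWF : L.WF) {s : S} {a o : A} {μ μ' : S → ℝ}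
    (ho : o ∈ L.out) (h : L.trans s o = some μ) (h' : L.trans s a = some μ') : a = o :=
  hWF.2.2.2.2.1 s a o μ μ' ho h h'

theorem WF.mem_out_of_trans (hWF : L.WF) {s : S} {a : A} {μ : S → ℝ}
    (h : L.trans s a = some μ) (ha : a ∉ L.inp) : a ∈ L.out :=
  (hWF.2.2.2.2.2.2 s a μ h).resolve_left ha

variable (L)

theorem traceProb_cons_cases (a : A) (s : S) (ivec : List A) :
    (∀ r s', L.traceProb (a :: r) s ivec s' = 0) ∨
    ∃ μ ivec', L.trans s a = some μ ∧ (a ∈ L.inp → ivec = a :: ivec') ∧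
      ∀ r s', L.traceProb (a :: r) s ivec s' = ∑' s'', μ s'' * L.traceProb r s'' ivec' s' := by
  by_cases ha : a ∈ L.inp
  · rcases ivec with _ | ⟨i, ivec'⟩
    · exact Or.inl fun r s' => by simp [traceProb, ha]
    by_cases hi : i = a
    · subst hi
      cases htr : L.trans s i with
      | none => exact Or.inl fun r s' => by simp [traceProb, ha, htr]
      | some μ =>
        exact Or.inr ⟨μ, ivec', rfl, fun _ => rfl, fun r s' => by simp [traceProb, ha, htr]⟩
    · exact Or.inl fun r s' => by simp [traceProb, ha, hi]
  · cases htr : L.trans s a with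
    | none => exact Or.inl fun r s' => by simp [traceProb, ha, htr]
    | some μ => exact Or.inr ⟨μ, ivec, rfl, (absurd · ha), fun r s' => by simp [traceProb, ha, htr]⟩

variable {L}

theorem traceProb_isSubDist (hWF : L.WF) (avec : List A) (s : S) (ivec : List A) :
    IsSubDist (L.traceProb avec s ivec) := by
  induction avec generalizing s ivec with
  | nil =>
    refine ⟨fun s' => ?_, (hasSum_ite_eq s 1).summable, (tsum_ite_eq s 1).le⟩
    simp only [traceProb]
    split_ifs <;> norm_num
  | cons a r ih =>
    rcases L.traceProb_cons_cases a s ivec with h | ⟨μ, ivec', htr, -, h⟩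
    · rw [funext (h r)]
      exact ⟨fun _ => le_rfl, summable_zero, by simp⟩
    · rw [funext (h r)]
      exact (hWF.isSubDist_of_trans htr).mixture fun s'' => ih s'' ivec'

theorem prefixProb_nonneg (hWF : L.WF) (s : S) (ivec avec : List A) :
    0 ≤ L.prefixProb s ivec avec :=
  tsum_nonneg (traceProb_isSubDist hWF avec s ivec).nonneg

theorem prefixProb_le_one (hWF : L.WF) (s : S) (ivec avec : List A) :
    L.prefixProb s ivec avec ≤ 1 :=
  (traceProb_isSubDist hWF avec s ivec).tsum_le_one

theorem prefixProb_nil (s : S) (ivec : List A) : L.prefixProb s ivec [] = 1 :=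
  tsum_ite_eq s 1

theorem prefixProb_cons_cases (hWF : L.WF) (a : A) (s : S) (ivec : List A) :
    (∀ r, L.prefixProb s ivec (a :: r) = 0) ∨
    ∃ μ ivec', L.trans s a = some μ ∧ (a ∈ L.inp → ivec = a :: ivec') ∧
      ∀ r, L.prefixProb s ivec (a :: r) = ∑' s'', μ s'' * L.prefixProb s'' ivec' r := by
  rcases L.traceProb_cons_cases a s ivec with h | ⟨μ, ivec', htr, hin, h⟩
  · exact Or.inl fun r => by simp [prefixProb, h]
  · refine Or.inr ⟨μ, ivec', htr, hin, fun r => ?_⟩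
    simp only [prefixProb, h]
    exact (hWF.isSubDist_of_trans htr).tsum_mixture fun s'' => traceProb_isSubDist hWF r s'' ivec'

/-- Input actions are pinned down by the next available input, output actions by output
determinism. -/
theorem head_eq_of_prefixProb_ne_zero (hWF : L.WF) {s : S} {ivec r r' : List A} {a a' : A}
    (h : L.prefixProb s ivec (a :: r) ≠ 0) (h' : L.prefixProb s ivec (a' :: r') ≠ 0) :
    a = a' := by
  obtain h | ⟨μ, iv, htr, hin, -⟩ := L.prefixProb_cons_cases hWF a s ivec
  · exact absurd (h r) ‹_›
  obtain h' | ⟨μ', iv', htr', hin', -⟩ := L.prefixProb_cons_cases hWF a' s ivec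
  · exact absurd (h' r') ‹_›
  by_cases ha : a ∈ L.inp
  · by_cases ha' : a' ∈ L.inp
    · exact (List.cons.inj ((hin ha).symm.trans (hin' ha'))).1
    · exact hWF.eq_of_trans_of_mem_out (hWF.mem_out_of_trans htr' ha') htr' htr
  · exact (hWF.eq_of_trans_of_mem_out (hWF.mem_out_of_trans htr ha) htr htr').symm


theorem sum_prefixProb_cons_le_one (hWF : L.WF) (s : S) (ivec : List A) (a : A)
    {G : Finset (List A)} (hG : ∀ s' ivec', ∑ t ∈ G, L.prefixProb s' ivec' t ≤ 1) :
    ∑ t ∈ G, L.prefixProb s ivec (a :: t) ≤ 1 := by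
  obtain h | ⟨μ, ivec', htr, -, hstep⟩ := L.prefixProb_cons_cases hWF a s ivec
  · simp [h]
  have hμ := hWF.isSubDist_of_trans htr
  calc ∑ t ∈ G, L.prefixProb s ivec (a :: t)
      = ∑ t ∈ G, ∑' s'', μ s'' * L.prefixProb s'' ivec' t := Finset.sum_congr rfl fun t _ => hstep t
    _ = ∑' s'', μ s'' * ∑ t ∈ G, L.prefixProb s'' ivec' t := by
        rw [← Summable.tsum_finsetSum fun t _ => hμ.summable_mul
          (fun s'' => prefixProb_nonneg hWF s'' ivec' t)
          fun s'' => prefixProb_le_one hWF s'' ivec' t]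
        simp only [Finset.mul_sum]
    _ ≤ 1 := hμ.tsum_mul_le_one
        (fun s'' => Finset.sum_nonneg fun t _ => prefixProb_nonneg hWF s'' ivec' t)
        fun s'' => hG s'' ivec'

theorem sum_prefixProb_le_one_of_length_le (hWF : L.WF) (n : ℕ) :
    ∀ (F : Finset (List A)), (∀ a ∈ F, a.length ≤ n) → IsAntichain (· <+: ·) (F : Set (List A)) →
      ∀ s ivec, ∑ a ∈ F, L.prefixProb s ivec a ≤ 1 := by
  induction n with
  | zero =>
    intro F hlen _ s ivec
    have hF : F ⊆ {[]} := fun a ha => by simpa using hlen a ha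
    calc ∑ a ∈ F, L.prefixProb s ivec a ≤ ∑ a ∈ {[]}, L.prefixProb s ivec a :=
          Finset.sum_le_sum_of_subset_of_nonneg hF fun a _ _ => prefixProb_nonneg hWF s ivec a
      _ = 1 := by rw [Finset.sum_singleton, prefixProb_nil]
  | succ n ih =>
    intro F hlen hF s ivec
    by_cases hnil : [] ∈ F
    · have : F = {[]} := Finset.eq_singleton_iff_unique_mem.2
        ⟨hnil, fun b hb => by_contra fun hb' => hF hnil hb (Ne.symm hb') List.nil_prefix⟩
      rw [this, Finset.sum_singleton, prefixProb_nil]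
    by_cases hzero : ∀ a ∈ F, L.prefixProb s ivec a = 0
    · rw [Finset.sum_eq_zero hzero]
      exact zero_le_one
    push Not at hzero
    obtain ⟨b, hbF, hb⟩ := hzero
    obtain ⟨a₀, t₀, rfl⟩ := List.exists_cons_of_ne_nil (ne_of_mem_of_not_mem hbF hnil)
    set G := F.preimage (List.cons a₀) List.cons_injective.injOn
    have hsplit : ∑ t ∈ G, L.prefixProb s ivec (a₀ :: t) = ∑ a ∈ F, L.prefixProb s ivec a := by
      refine Finset.sum_preimage _ F _ _ fun a haF ha => ?_
      obtain ⟨a', t, rfl⟩ := List.exists_cons_of_ne_nil (ne_of_mem_of_not_mem haF hnil)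
      by_contra hne
      exact ha ⟨t, by rw [head_eq_of_prefixProb_ne_zero hWF hb hne]⟩
    have hG : IsAntichain (· <+: ·) (G : Set (List A)) := by
      rw [Finset.coe_preimage]
      exact hF.preimage List.cons_injective fun t₁ t₂ h => (List.prefix_cons_inj a₀).2 h
    have hGlen : ∀ t ∈ G, t.length ≤ n := fun t ht => by
      simpa using hlen _ (Finset.mem_preimage.1 ht)
    exact hsplit ▸ sum_prefixProb_cons_le_one hWF s ivec a₀ (ih G hGlen hG)

theorem sum_prefixProb_le_one (hWF : L.WF) (s : S) (ivec : List A) {F : Finset (List A)}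
    (hF : IsAntichain (· <+: ·) (F : Set (List A))) : ∑ a ∈ F, L.prefixProb s ivec a ≤ 1 :=
  sum_prefixProb_le_one_of_length_le hWF _ F (fun _ => Finset.le_sup) hF s ivec

theorem summable_prefixProb_comp (hWF : L.WF) (s : S) (ivec : List A) {ι : Type*}
    {φ : ι → List A} (hφ : Function.Injective φ) (hU : IsAntichain (· <+: ·) (Set.range φ)) :
    Summable fun i => L.prefixProb s ivec (φ i) := by
  refine summable_of_sum_le (c := 1) (fun i => prefixProb_nonneg hWF s ivec (φ i)) fun u => ?_
  rw [← Finset.sum_image hφ.injOn]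
  refine sum_prefixProb_le_one hWF s ivec (hU.subset ?_)
  rw [Finset.coe_image]
  exact Set.image_subset_range φ _

theorem summable_obsProb (hWF : L.WF) (s : S) (ivec : List A) {T : Set (List A)}
    (hT : IsAntichain (· <+: ·) T) : Summable fun e : T => L.obsProb s ivec e.1 := by
  let φ : (Σ e : T, L.gamma e.1) → List A := fun p => p.2.1
  have hφ : Function.Injective φ := by
    rintro ⟨⟨e₁, he₁⟩, a₁, ha₁⟩ ⟨⟨e₂, he₂⟩, a₂, ha₂⟩ (rfl : a₁ = a₂)
    obtain rfl := eq_of_mem_gammaSet ha₁ ha₂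
    rfl
  have hU : IsAntichain (· <+: ·) (Set.range φ) := by
    rintro _ ⟨⟨⟨e₁, he₁⟩, a₁, ha₁⟩, rfl⟩ _ ⟨⟨⟨e₂, he₂⟩, a₂, ha₂⟩, rfl⟩ hne hpre
    refine hne (eq_of_isPrefix_of_mem_gammaSet (fun he => ?_) ha₁ ha₂ hpre)
    exact by_contra fun hne' => hT he₁ he₂ hne' he
  exact ((summable_sigma_of_nonneg fun p => prefixProb_nonneg hWF s ivec (φ p)).1
    (summable_prefixProb_comp hWF s ivec hφ hU)).2

end PLTS

theorem isAntichain_minimalPrefixes {X : Type*} (T : Set (List X)) :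
    IsAntichain (· <+: ·) (minimalPrefixes T) :=
  fun _ he₁ _ he₂ hne hpre => he₂.2 ⟨_, he₁.1, hpre, hne⟩

theorem minimalPrefixes_singleton {X : Type*} (e : List X) : minimalPrefixes {e} = {e} := by
  ext e'
  simp only [minimalPrefixes, Set.mem_ofPred_eq, Set.mem_singleton_iff]
  exact ⟨And.left, fun h => ⟨h, fun ⟨_, he', _, hne⟩ => hne (he'.trans h.symm)⟩⟩

theorem PLTS.obsSetProb_singleton {S A : Type*} (L : PLTS S A) (s : S) (ivec evec : List A) :
    L.obsSetProb s ivec {evec} = L.obsProb s ivec evec := by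
  rw [obsSetProb, minimalPrefixes_singleton]
  exact tsum_singleton evec (L.obsProb s ivec)

section Statements

open PLTS

variable {S : Type} {A : Type}

theorem stmt7_general (L : PLTS S A) (hWF : L.WF) (s₀ : S) (ε : ℝ) :
    L.DiffNI s₀ ε ↔
      ∀ i₁ i₂ : List A, (∀ a ∈ i₁, a ∈ L.inp) → (∀ a ∈ i₂, a ∈ L.inp) → L.AdjOne i₁ i₂ →
        ∀ evec : List A, (∀ a ∈ evec, a ∈ L.obs) →
          L.obsProb s₀ i₁ evec ≤ Real.exp ε * L.obsProb s₀ i₂ evec := by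
  refine ⟨fun h i₁ i₂ h₁ h₂ hadj evec hobs => ?_, fun h i₁ i₂ h₁ h₂ hadj T hT => ?_⟩
  · have := h i₁ i₂ h₁ h₂ hadj {evec} (by simpa using hobs)
    rwa [obsSetProb_singleton, obsSetProb_singleton] at this
  · have hmin := isAntichain_minimalPrefixes T
    calc L.obsSetProb s₀ i₁ T
        ≤ ∑' e : minimalPrefixes T, Real.exp ε * L.obsProb s₀ i₂ e.1 :=
          (summable_obsProb hWF s₀ i₁ hmin).tsum_le_tsum
            (fun e => h i₁ i₂ h₁ h₂ hadj e.1 (hT e.1 e.2.1))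
            ((summable_obsProb hWF s₀ i₂ hmin).mul_left _)
      _ = Real.exp ε * L.obsSetProb s₀ i₂ T := tsum_mul_left

theorem stmt7 [Countable S] [Countable A] (L : PLTS S A) (hWF : L.WF) (s₀ : S) (ε : ℝ) :
    L.DiffNI s₀ ε ↔
      ∀ i₁ i₂ : List A, (∀ a ∈ i₁, a ∈ L.inp) → (∀ a ∈ i₂, a ∈ L.inp) → L.AdjOne i₁ i₂ →
        ∀ evec : List A, (∀ a ∈ evec, a ∈ L.obs) →
          L.obsProb s₀ i₁ evec ≤ Real.exp ε * L.obsProb s₀ i₂ evec :=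
  stmt7_general L hWF s₀ ε
end Statements
end

section
/- If an automaton M has ε-differential noninterference, then for all input sequences i⃗₁, i⃗₂ with Δ(i⃗₁,i⃗₂) ≤ n and all S ⊆ E*: Pr[⟦M⟧(i⃗₁)↾E ⊒ S] ≤ e^{n·ε} · Pr[⟦M⟧(i⃗₂)↾E ⊒ S]. -/
open scoped Classical

/-!
Unfolding `Δ(i⃗₁,i⃗₂) ≤ n + 1` once gives an intermediate sequence of inputs `m` with
`Δ(i⃗₁,m) ≤ 1` and `Δ(m,i⃗₂) ≤ n`; applying `ε`-differential noninterference along the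
resulting chain of `n` adjacent pairs costs a factor `e^ε` per step.
-/

namespace PLTS

variable {S : Type*} {A : Type*} (L : PLTS S A)

theorem deltaLe_refl : ∀ (n : ℕ) (i : List A), L.DeltaLe n i i
  | 0, _ => rfl
  | _ + 1, _ => Or.inl rfl

theorem DeltaLe.append_left {n : ℕ} {p₁ p₂ : List A} (pre : List A) (h : L.DeltaLe n p₁ p₂) :
    L.DeltaLe n (pre ++ p₁) (pre ++ p₂) := by
  cases n with
  | zero => exact congrArg (pre ++ ·) h
  | succ n =>
    rcases h with rfl | ⟨pre', q₁, q₂, d, hd, hcase, h⟩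
    · exact Or.inl rfl
    · refine Or.inr ⟨pre ++ pre', q₁, q₂, d, hd, ?_, h⟩
      rcases hcase with ⟨rfl, rfl⟩ | ⟨rfl, rfl⟩ <;> simp

/-- In the second case of `DeltaLe`, the data point inserted into `i₂` is inserted into `i₁`
as well, so that the first step of the chain always starts at `i₁`. -/
theorem DeltaLe.exists_adjOne {n : ℕ} {i₁ i₂ : List A} (h : L.DeltaLe (n + 1) i₁ i₂) :
    ∃ m, L.AdjOne i₁ m ∧ L.DeltaLe n m i₂ ∧ ∀ a ∈ m, a ∈ i₁ ∨ a ∈ i₂ := by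
  rcases h with rfl | ⟨pre, p₁, p₂, d, hd, ⟨rfl, rfl⟩ | ⟨rfl, rfl⟩, h⟩
  · exact ⟨i₁, Or.inl rfl, L.deltaLe_refl n i₁, fun a ha => Or.inl ha⟩
  · refine ⟨pre ++ p₁, Or.inr ⟨pre, p₁, d, hd, Or.inl ⟨rfl, rfl⟩⟩, h.append_left L pre, ?_⟩
    intro a ha
    simp only [List.mem_append, List.mem_cons] at ha ⊢
    tauto
  · refine ⟨pre ++ d :: p₁, Or.inr ⟨pre, p₁, d, hd, Or.inr ⟨rfl, rfl⟩⟩,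
      (show L.DeltaLe n (d :: p₁) (d :: p₂) from h.append_left L [d]).append_left L pre, ?_⟩
    intro a ha
    simp only [List.mem_append, List.mem_cons] at ha ⊢
    tauto

theorem le_exp_mul_of_deltaLe (f : List A → ℝ) (ε : ℝ)
    (hf : ∀ i₁ i₂ : List A, (∀ a ∈ i₁, a ∈ L.inp) → (∀ a ∈ i₂, a ∈ L.inp) → L.AdjOne i₁ i₂ →
      f i₁ ≤ Real.exp ε * f i₂) :
    ∀ {n : ℕ} {i₁ i₂ : List A}, L.DeltaLe n i₁ i₂ → (∀ a ∈ i₁, a ∈ L.inp) →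
      (∀ a ∈ i₂, a ∈ L.inp) → f i₁ ≤ Real.exp (n * ε) * f i₂
  | 0, _, _, rfl, _, _ => by simp
  | n + 1, i₁, i₂, hΔ, h₁, h₂ => by
    obtain ⟨m, hadj, hΔ', hm⟩ := hΔ.exists_adjOne L
    have hm_inp : ∀ a ∈ m, a ∈ L.inp := fun a ha => (hm a ha).elim (h₁ a) (h₂ a)
    calc f i₁ ≤ Real.exp ε * f m := hf i₁ m h₁ hm_inp hadj
      _ ≤ Real.exp ε * (Real.exp (n * ε) * f i₂) := by
        gcongr
        exact le_exp_mul_of_deltaLe f ε hf hΔ' hm_inp h₂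
      _ = Real.exp ((n + 1 : ℕ) * ε) * f i₂ := by
        rw [← mul_assoc, ← Real.exp_add]
        push_cast
        ring_nf

end PLTS

section Statements

open PLTS

variable {S : Type} {A : Type}

theorem stmt8_general (L : PLTS S A) (s₀ : S) (ε : ℝ)
    (hDNI : L.DiffNI s₀ ε) (n : ℕ) (i₁ i₂ : List A)
    (h₁ : ∀ a ∈ i₁, a ∈ L.inp) (h₂ : ∀ a ∈ i₂, a ∈ L.inp) (hΔ : L.DeltaLe n i₁ i₂)
    (T : Set (List A)) (hT : ∀ e ∈ T, ∀ a ∈ e, a ∈ L.obs) :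
    L.obsSetProb s₀ i₁ T ≤ Real.exp (n * ε) * L.obsSetProb s₀ i₂ T :=
  L.le_exp_mul_of_deltaLe (fun i => L.obsSetProb s₀ i T) ε
    (fun _ _ h₁ h₂ hadj => hDNI _ _ h₁ h₂ hadj T hT) hΔ h₁ h₂

theorem stmt8 [Countable S] [Countable A] (L : PLTS S A) (hWF : L.WF) (s₀ : S) (ε : ℝ)
    (hDNI : L.DiffNI s₀ ε) (n : ℕ) (i₁ i₂ : List A)
    (h₁ : ∀ a ∈ i₁, a ∈ L.inp) (h₂ : ∀ a ∈ i₂, a ∈ L.inp) (hΔ : L.DeltaLe n i₁ i₂)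
    (T : Set (List A)) (hT : ∀ e ∈ T, ∀ a ∈ e, a ∈ L.obs) :
    L.obsSetProb s₀ i₁ T ≤ Real.exp (n * ε) * L.obsSetProb s₀ i₂ T :=
  stmt8_general L s₀ ε hDNI n i₁ i₂ h₁ h₂ hΔ T hT

end Statements
end

section
/- For every set K of sanitization functions such that each function in K has ε-differential privacy, the automaton M_ex1(K) has (2t·ε)-differential noninterference. -/
open scoped Classical

/-- A sanitization function: for each data set (finite multiset of data points)
a discrete probability distribution over responses. -/
structure SanFn (D R : Type) where
  f : Multiset D → R → ℝ
  nonneg : ∀ B r, 0 ≤ f B r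
  total : ∀ B, (∑' r : R, f B r) = 1

/-- Two multisets differ on at most one element. -/
def MSAdj {D : Type} (B₁ B₂ : Multiset D) : Prop :=
  B₁ = B₂ ∨ ∃ d : D, d ::ₘ B₁ = B₂ ∨ d ::ₘ B₂ = B₁

/-- `ε`-differential privacy of a sanitization function. -/
def HasDP {D R : Type} (ε : ℝ) (k : SanFn D R) : Prop :=
  ∀ B₁ B₂ : Multiset D, MSAdj B₁ B₂ → ∀ r : R, k.f B₁ r ≤ Real.exp ε * k.f B₂ r

/-- The (`H`-disabled) states of the automaton `M_ex1(K)`: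
`pc16 = false` corresponds to the input-accepting state at line 08 and
`pc16 = true` to the output state at line 16; `B` is the array of `t` slots of
data points, `n` the array of slot sizes, `c` the current slot, `y` the last input,
`r` the pending response, and `k` (represented by its query) the chosen
sanitization function. -/
structure ExState (D Q R : Type) (t : ℕ) where
  pc16 : Bool
  B : Fin t → Multiset D
  n : Fin t → ℕ
  c : Fin t
  y : D ⊕ Q
  r : R
  k : Q

variable {D Q R : Type}

/-- Effect of receiving the data point `d` at line 08 (Add if the current slot has
fewer than `v` data points, Drop otherwise). -/
def addOrDrop {t : ℕ} (v : ℕ) (s : ExState D Q R t) (d : D) : ExState D Q R t :=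
  if s.n s.c < v then
    { pc16 := false, B := Function.update s.B s.c (d ::ₘ s.B s.c),
      n := Function.update s.n s.c (s.n s.c + 1), c := s.c, y := Sum.inl d,
      r := s.r, k := s.k }
  else
    { s with pc16 := false, y := Sum.inl d }

/-- State at line 16 reached after answering query `q` with response `r'`. -/
def answerState {t : ℕ} (s : ExState D Q R t) (q : Q) (r' : R) : ExState D Q R t :=
  { pc16 := true, B := s.B, n := s.n, c := s.c, y := Sum.inr q, r := r', k := q }

/-- Effect of outputting the pending response: advance the current slot cyclically
and delete the old data in the new current slot. -/
def advanceState {t : ℕ} [NeZero t] (s : ExState D Q R t) : ExState D Q R t :=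
  { pc16 := false, B := Function.update s.B (s.c + 1) 0,
    n := Function.update s.n (s.c + 1) 0, c := s.c + 1, y := s.y, r := s.r, k := s.k }

/-- The union of all the data points stored in all the slots. -/
def totalB {t : ℕ} (s : ExState D Q R t) : Multiset D :=
  ∑ j : Fin t, s.B j

/-- The observable prefix probability `Pr[⟦M_ex1(K)⟧(i⃗)↾E ⊒ e⃗]`, defined directly
from the extended transitions of `M_ex1(K)`. -/
noncomputable def exP {t : ℕ} [NeZero t] (v : ℕ) (κ : Q → SanFn D R) :
    ExState D Q R t → List (D ⊕ Q) → List (Q ⊕ R) → ℝ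
  | _, _, [] => 1
  | s, ivec, e :: evec' =>
    if s.pc16 then
      match e with
      | Sum.inr r' => if r' = s.r then exP v κ (advanceState s) ivec evec' else 0
      | Sum.inl _ => 0
    else
      match ivec with
      | [] => 0
      | Sum.inl d :: ivec' => exP v κ (addOrDrop v s d) ivec' (e :: evec')
      | Sum.inr q :: ivec' =>
        match e with
        | Sum.inl q' =>
          if q' = q then
            ∑' r' : R, (κ q).f (totalB s) r' * exP v κ (answerState s q r') ivec' evec'
          else 0
        | Sum.inr _ => 0
  termination_by s ivec evec => ivec.length + evec.length
  decreasing_by all_goals simp_wf <;> omega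

/-- `Pr[⟦M_ex1(K)⟧(i⃗)↾E ⊒ T]` for a set `T` of observable sequences. -/
noncomputable def exPSet {t : ℕ} [NeZero t] (v : ℕ) (κ : Q → SanFn D R)
    (s : ExState D Q R t) (ivec : List (D ⊕ Q)) (T : Set (List (Q ⊕ R))) : ℝ :=
  ∑' e : minimalPrefixes T, exP v κ s ivec e.1

/-- `Δ(i⃗₁,i⃗₂) ≤ 1`: the input sequences are equal or one is obtained from the
other by inserting a single data point. -/
def AdjOneIn {D Q : Type} (i₁ i₂ : List (D ⊕ Q)) : Prop :=
  i₁ = i₂ ∨ ∃ (pre post : List (D ⊕ Q)) (d : D),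
    (i₁ = pre ++ Sum.inl d :: post ∧ i₂ = pre ++ post) ∨
    (i₂ = pre ++ Sum.inl d :: post ∧ i₁ = pre ++ post)

/-- The initial state `s₀` of `M_ex1(K)`. -/
def initState {t : ℕ} [NeZero t] (y₀ : D ⊕ Q) (r₀ : R) (k₀ : Q) : ExState D Q R t :=
  { pc16 := false, B := fun _ => 0, n := fun _ => 0, c := 0, y := y₀, r := r₀, k := k₀ }

/-!
Inserting a data point `d` changes a run only from the moment `d` is read. If the current
slot is full, `d` is dropped and nothing observable changes. Otherwise `d` is stored in the
current slot `j`, and from then on the two runs differ only in slot `j`: whenever both runs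
push further data into it, one may overflow while the other does not, but the two contents
always stay within one insertion each of a common multiset. Every answer computed while slot
`j` differs thus costs a factor `exp (2ε)` by differential privacy, and the output step after
the `t`-th such answer empties slot `j`, after which the runs are equal. The pointwise bound
`exp (2tε)` then passes to the sums over minimal prefixes.
-/

variable {t : ℕ} {v : ℕ} {κ : Q → SanFn D R} {ε : ℝ}

lemma SanFn.summable (k : SanFn D R) (B : Multiset D) : Summable (k.f B) := by
  by_contra h
  simpa [tsum_eq_zero_of_not_summable h] using k.total B

lemma SanFn.summable_mul (k : SanFn D R) (B : Multiset D) {a : R → ℝ}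
    (ha : ∀ r, a r ∈ Set.Icc (0 : ℝ) 1) : Summable fun r => k.f B r * a r :=
  (k.summable B).of_nonneg_of_le (fun r => mul_nonneg (k.nonneg B r) (ha r).1)
    (fun r => mul_le_of_le_one_right (k.nonneg B r) (ha r).2)

lemma tsum_le_mul_tsum {ι : Type*} {f g : ι → ℝ} {C : ℝ} (hf : Summable f) (hg : Summable g)
    (h : ∀ i, f i ≤ C * g i) : ∑' i, f i ≤ C * ∑' i, g i := by
  rw [← tsum_mul_left]
  exact hf.tsum_le_tsum h (hg.mul_left C)

/-- No summability is needed: if `g` is not summable then neither is `f`, and both sums are `0`. -/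
lemma tsum_le_mul_tsum_of_le_of_le {ι : Type*} {f g : ι → ℝ} {C C' : ℝ} (hf : ∀ i, 0 ≤ f i)
    (hg : ∀ i, 0 ≤ g i) (hfg : ∀ i, f i ≤ C * g i) (hgf : ∀ i, g i ≤ C' * f i) :
    ∑' i, f i ≤ C * ∑' i, g i := by
  by_cases hs : Summable g
  · exact tsum_le_mul_tsum (Summable.of_nonneg_of_le hf hfg (hs.mul_left C)) hs hfg
  · have hs' : ¬ Summable f := fun hs' => hs (Summable.of_nonneg_of_le hg hgf (hs'.mul_left C'))
    simp [tsum_eq_zero_of_not_summable hs, tsum_eq_zero_of_not_summable hs']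

lemma MSAdj.symm {B₁ B₂ : Multiset D} (h : MSAdj B₁ B₂) : MSAdj B₂ B₁ := by
  rcases h with rfl | ⟨d, h | h⟩
  exacts [Or.inl rfl, Or.inr ⟨d, Or.inr h⟩, Or.inr ⟨d, Or.inl h⟩]

lemma msAdj_add_of_card_le_one (B : Multiset D) {X : Multiset D} (hX : Multiset.card X ≤ 1) :
    MSAdj (X + B) B := by
  rcases Nat.le_one_iff_eq_zero_or_eq_one.mp hX with hX | hX
  · simp [Multiset.card_eq_zero.mp hX, MSAdj]
  · obtain ⟨x, rfl⟩ := Multiset.card_eq_one.mp hX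
    exact Or.inr ⟨x, Or.inr (by simp)⟩

lemma HasDP.apply_add_le {k : SanFn D R} (hk : HasDP ε k) (B : Multiset D) {X₁ X₂ : Multiset D}
    (h₁ : Multiset.card X₁ ≤ 1) (h₂ : Multiset.card X₂ ≤ 1) (r : R) :
    k.f (X₁ + B) r ≤ Real.exp (2 * ε) * k.f (X₂ + B) r :=
  calc k.f (X₁ + B) r ≤ Real.exp ε * k.f B r := hk _ _ (msAdj_add_of_card_le_one B h₁) r
    _ ≤ Real.exp ε * (Real.exp ε * k.f (X₂ + B) r) := by
      gcongr; exact hk _ _ (msAdj_add_of_card_le_one B h₂).symm r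
    _ = Real.exp (2 * ε) * k.f (X₂ + B) r := by rw [← mul_assoc, ← Real.exp_add, two_mul]

def ExState.slot (s : ExState D Q R t) (i : Fin t) : Multiset D × ℕ := (s.B i, s.n i)

def slotPush (v : ℕ) (d : D) (p : Multiset D × ℕ) : Multiset D × ℕ :=
  if p.2 < v then (d ::ₘ p.1, p.2 + 1) else p

/-- The counter condition says `n₁ - card B₁ = n₂ - card B₂`; it decides which side overflows
first when both slots are pushed. -/
def SlotNear (p₁ p₂ : Multiset D × ℕ) : Prop :=
  ∃ B X₁ X₂ : Multiset D, Multiset.card X₁ ≤ 1 ∧ Multiset.card X₂ ≤ 1 ∧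
    p₁.1 = X₁ + B ∧ p₂.1 = X₂ + B ∧ p₁.2 + Multiset.card X₂ = p₂.2 + Multiset.card X₁

namespace SlotNear

variable {p₁ p₂ : Multiset D × ℕ}

lemma symm (h : SlotNear p₁ p₂) : SlotNear p₂ p₁ :=
  let ⟨B, X₁, X₂, h₁, h₂, e₁, e₂, hn⟩ := h
  ⟨B, X₂, X₁, h₂, h₁, e₂, e₁, hn.symm⟩

lemma push_left_self (v : ℕ) (d : D) (p : Multiset D × ℕ) : SlotNear (slotPush v d p) p := by
  unfold slotPush
  split_ifs
  · exact ⟨p.1, {d}, 0, by simp, by simp, by simp, by simp, by simp⟩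
  · exact ⟨p.1, 0, 0, by simp, by simp, by simp, by simp, rfl⟩

lemma cons_left (h : SlotNear p₁ p₂) (hlt : p₁.2 < p₂.2) (d : D) :
    SlotNear (d ::ₘ p₁.1, p₁.2 + 1) p₂ := by
  obtain ⟨B, X₁, X₂, h₁, h₂, e₁, e₂, hn⟩ := h
  obtain rfl : X₁ = 0 := Multiset.card_eq_zero.mp (by omega)
  exact ⟨B, {d}, X₂, by simp, h₂, by simp [e₁], e₂, by simp at hn ⊢; omega⟩

lemma push (h : SlotNear p₁ p₂) (v : ℕ) (d : D) : SlotNear (slotPush v d p₁) (slotPush v d p₂) := by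
  unfold slotPush
  split_ifs with h₁ h₂ h₂
  · obtain ⟨B, X₁, X₂, hX₁, hX₂, e₁, e₂, hn⟩ := h
    exact ⟨d ::ₘ B, X₁, X₂, hX₁, hX₂, by simp [e₁], by simp [e₂], by omega⟩
  · exact h.cons_left (by omega) d
  · exact (h.symm.cons_left (by omega) d).symm
  · exact h

end SlotNear

@[simp] lemma addOrDrop_pc16 (s : ExState D Q R t) (d : D) : (addOrDrop v s d).pc16 = false := by
  unfold addOrDrop; split_ifs <;> rfl

@[simp] lemma addOrDrop_c (s : ExState D Q R t) (d : D) : (addOrDrop v s d).c = s.c := by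
  unfold addOrDrop; split_ifs <;> rfl

@[simp] lemma addOrDrop_r (s : ExState D Q R t) (d : D) : (addOrDrop v s d).r = s.r := by
  unfold addOrDrop; split_ifs <;> rfl

lemma slot_addOrDrop (s : ExState D Q R t) (d : D) :
    (addOrDrop v s d).slot = Function.update s.slot s.c (slotPush v d (s.slot s.c)) := by
  funext i
  by_cases hi : i = s.c
  · subst hi
    unfold addOrDrop slotPush ExState.slot
    split_ifs <;> simp
  · unfold addOrDrop ExState.slot
    split_ifs <;> simp [Function.update_of_ne hi]

lemma totalB_eq_add (s : ExState D Q R t) (j : Fin t) :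
    totalB s = (s.slot j).1 + ∑ i ∈ Finset.univ.erase j, (s.slot i).1 :=
  (Finset.add_sum_erase _ (fun i => s.B i) (Finset.mem_univ j)).symm

/-- `answered` makes the two runs equal outright once slot `j` is emptied. -/
structure Coupled (j : Fin t) (s₁ s₂ : ExState D Q R t) : Prop where
  pc16_eq : s₁.pc16 = s₂.pc16
  c_eq : s₁.c = s₂.c
  r_eq : s₁.r = s₂.r
  slot_eq : ∀ i ≠ j, s₁.slot i = s₂.slot i
  slot_near : SlotNear (s₁.slot j) (s₂.slot j)
  answered : s₁.pc16 → s₁.y = s₂.y ∧ s₁.k = s₂.k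

namespace Coupled

variable {j : Fin t} {s₁ s₂ : ExState D Q R t}

lemma symm (h : Coupled j s₁ s₂) : Coupled j s₂ s₁ where
  pc16_eq := h.pc16_eq.symm
  c_eq := h.c_eq.symm
  r_eq := h.r_eq.symm
  slot_eq i hi := (h.slot_eq i hi).symm
  slot_near := h.slot_near.symm
  answered hpc :=
    let ⟨hy, hk⟩ := h.answered (h.pc16_eq ▸ hpc)
    ⟨hy.symm, hk.symm⟩

lemma receive_self {s : ExState D Q R t} (hpc : ¬s.pc16) (d : D) :
    Coupled s.c (addOrDrop v s d) s where
  pc16_eq := by simpa using hpc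
  c_eq := addOrDrop_c s d
  r_eq := addOrDrop_r s d
  slot_eq i hi := by rw [slot_addOrDrop, Function.update_of_ne hi]
  slot_near := by
    rw [slot_addOrDrop, Function.update_self]
    exact SlotNear.push_left_self v d _
  answered := by simp

lemma receive (h : Coupled j s₁ s₂) (d : D) :
    Coupled j (addOrDrop v s₁ d) (addOrDrop v s₂ d) where
  pc16_eq := by simp
  c_eq := by simp [h.c_eq]
  r_eq := by simp [h.r_eq]
  slot_eq i hi := by
    rw [slot_addOrDrop, slot_addOrDrop, ← h.c_eq]
    by_cases hic : i = s₁.c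
    · subst hic
      simp [h.slot_eq _ hi]
    · simp [Function.update_of_ne hic, h.slot_eq i hi]
  slot_near := by
    rw [slot_addOrDrop, slot_addOrDrop, ← h.c_eq]
    by_cases hjc : j = s₁.c
    · subst hjc
      simpa using h.slot_near.push v d
    · simpa [Function.update_of_ne hjc] using h.slot_near
  answered := by simp

lemma answer (h : Coupled j s₁ s₂) (q : Q) (r : R) :
    Coupled j (answerState s₁ q r) (answerState s₂ q r) where
  pc16_eq := rfl
  c_eq := h.c_eq
  r_eq := rfl
  slot_eq := h.slot_eq
  slot_near := h.slot_near
  answered _ := ⟨rfl, rfl⟩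

lemma apply_totalB_le (h : Coupled j s₁ s₂) {k : SanFn D R} (hk : HasDP ε k) (r : R) :
    k.f (totalB s₁) r ≤ Real.exp (2 * ε) * k.f (totalB s₂) r := by
  obtain ⟨B, X₁, X₂, h₁, h₂, e₁, e₂, -⟩ := h.slot_near
  have hrest :
      ∑ i ∈ Finset.univ.erase j, (s₁.slot i).1 = ∑ i ∈ Finset.univ.erase j, (s₂.slot i).1 :=
    Finset.sum_congr rfl fun i hi => by rw [h.slot_eq i (Finset.ne_of_mem_erase hi)]
  rw [totalB_eq_add s₁ j, totalB_eq_add s₂ j, e₁, e₂, hrest, add_assoc, add_assoc]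
  exact hk.apply_add_le _ h₁ h₂ r

end Coupled

variable [NeZero t]

section exP

variable (v κ)

lemma exP_nil (s : ExState D Q R t) (i : List (D ⊕ Q)) : exP v κ s i [] = 1 := by
  rw [exP.eq_def]

lemma exP_output {s : ExState D Q R t} (h : s.pc16) (i : List (D ⊕ Q)) (r : R)
    (e : List (Q ⊕ R)) :
    exP v κ s i (Sum.inr r :: e) = if r = s.r then exP v κ (advanceState s) i e else 0 := by
  rw [exP.eq_def]; simp [h]

lemma exP_output_query {s : ExState D Q R t} (h : s.pc16) (i : List (D ⊕ Q)) (q : Q)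
    (e : List (Q ⊕ R)) : exP v κ s i (Sum.inl q :: e) = 0 := by
  rw [exP.eq_def]; simp [h]

lemma exP_input_nil {s : ExState D Q R t} (h : ¬s.pc16) (x : Q ⊕ R) (e : List (Q ⊕ R)) :
    exP v κ s [] (x :: e) = 0 := by
  rw [exP.eq_def]; simp [h]

lemma exP_data {s : ExState D Q R t} (h : ¬s.pc16) (d : D) (i : List (D ⊕ Q)) (x : Q ⊕ R)
    (e : List (Q ⊕ R)) :
    exP v κ s (Sum.inl d :: i) (x :: e) = exP v κ (addOrDrop v s d) i (x :: e) := by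
  rw [exP.eq_def]; simp [h]

lemma exP_query {s : ExState D Q R t} (h : ¬s.pc16) (q : Q) (i : List (D ⊕ Q)) (q' : Q)
    (e : List (Q ⊕ R)) :
    exP v κ s (Sum.inr q :: i) (Sum.inl q' :: e) =
      if q' = q then ∑' r, (κ q).f (totalB s) r * exP v κ (answerState s q r) i e else 0 := by
  rw [exP.eq_def]; simp [h]

lemma exP_query_response {s : ExState D Q R t} (h : ¬s.pc16) (q : Q) (i : List (D ⊕ Q)) (r : R)
    (e : List (Q ⊕ R)) : exP v κ s (Sum.inr q :: i) (Sum.inr r :: e) = 0 := by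
  rw [exP.eq_def]; simp [h]

lemma exP_mem_Icc (s : ExState D Q R t) (i : List (D ⊕ Q)) (e : List (Q ⊕ R)) :
    exP v κ s i e ∈ Set.Icc (0 : ℝ) 1 := by
  induction s, i, e using exP.induct (t := t) v with
  | case1 s i => simp [exP_nil]
  | case2 s i e hpc ih => rwa [exP_output v κ hpc, if_pos rfl]
  | case3 s i e hpc r hr => simp [exP_output v κ hpc, hr]
  | case4 s i e hpc q => simp [exP_output_query v κ hpc]
  | case5 s x e hpc => simp [exP_input_nil v κ hpc]
  | case6 s x e hpc d i ih => rwa [exP_data v κ hpc]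
  | case7 s e hpc i q ih =>
    rw [exP_query v κ hpc, if_pos rfl]
    refine ⟨tsum_nonneg fun r => mul_nonneg ((κ q).nonneg _ _) (ih r).1, ?_⟩
    calc _ ≤ ∑' r, (κ q).f (totalB s) r :=
          ((κ q).summable_mul _ ih).tsum_le_tsum
            (fun r => mul_le_of_le_one_right ((κ q).nonneg _ _) (ih r).2) ((κ q).summable _)
      _ = 1 := (κ q).total _
  | case8 s e hpc q i q' hq => simp [exP_query v κ hpc, hq]
  | case9 s e hpc q i r => simp [exP_query_response v κ hpc]

lemma exP_nonneg (s : ExState D Q R t) (i : List (D ⊕ Q)) (e : List (Q ⊕ R)) :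
    0 ≤ exP v κ s i e :=
  (exP_mem_Icc v κ s i e).1

end exP

lemma slot_advanceState (s : ExState D Q R t) :
    (advanceState s).slot = Function.update s.slot (s.c + 1) (0, 0) := by
  funext i
  by_cases hi : i = s.c + 1 <;> simp [advanceState, ExState.slot, hi]

/-- Slot `j` is emptied by the `((j - (c + 1)) + 1)`-th advance from now, and one query is
answered before each advance except the one already answered when `pc16` holds. -/
def answersLeft (s : ExState D Q R t) (j : Fin t) : ℕ :=
  ((j - (s.c + 1) : Fin t) : ℕ) + if s.pc16 then 0 else 1

lemma answersLeft_le (s : ExState D Q R t) (j : Fin t) : answersLeft s j ≤ t := by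
  have hlt := (j - (s.c + 1)).isLt
  unfold answersLeft
  split_ifs <;> omega

lemma answersLeft_addOrDrop {s : ExState D Q R t} (hpc : ¬s.pc16) (d : D) (j : Fin t) :
    answersLeft (addOrDrop v s d) j = answersLeft s j := by
  simp [answersLeft, hpc]

lemma answersLeft_answerState {s : ExState D Q R t} (hpc : ¬s.pc16) (q : Q) (r : R) (j : Fin t) :
    answersLeft (answerState s q r) j + 1 = answersLeft s j := by
  simp [answersLeft, answerState, hpc]

lemma answersLeft_advanceState {s : ExState D Q R t} (hpc : s.pc16) {j : Fin t}
    (hj : j ≠ s.c + 1) : answersLeft (advanceState s) j = answersLeft s j := by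
  have hx : j - (s.c + 1) ≠ 0 := sub_ne_zero.mpr hj
  have hpos : 0 < ((j - (s.c + 1) : Fin t) : ℕ) := Fin.pos_iff_ne_zero.mpr hx
  have hsub : j - (s.c + 1 + 1) = j - (s.c + 1) - 1 := (sub_sub _ _ _).symm
  simp only [answersLeft, advanceState, hpc, if_true, Bool.false_eq_true, if_false, hsub,
    Fin.val_sub_one_of_ne_zero hx]
  omega

namespace Coupled

variable {j : Fin t} {s₁ s₂ : ExState D Q R t}

lemma advance (h : Coupled j s₁ s₂) (hj : j ≠ s₁.c + 1) :
    Coupled j (advanceState s₁) (advanceState s₂) where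
  pc16_eq := rfl
  c_eq := by simp [advanceState, h.c_eq]
  r_eq := h.r_eq
  slot_eq i hi := by
    rw [slot_advanceState, slot_advanceState, ← h.c_eq]
    by_cases hic : i = s₁.c + 1
    · simp [hic]
    · simp [Function.update_of_ne hic, h.slot_eq i hi]
  slot_near := by
    rw [slot_advanceState, slot_advanceState, ← h.c_eq, Function.update_of_ne hj,
      Function.update_of_ne hj]
    exact h.slot_near
  answered := by simp [advanceState]

lemma advance_eq (h : Coupled j s₁ s₂) (hpc : s₁.pc16) (hj : j = s₁.c + 1) :
    advanceState s₁ = advanceState s₂ := by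
  obtain ⟨hy, hk⟩ := h.answered hpc
  have hslot (i : Fin t) (hi : i ≠ s₁.c + 1) : s₁.B i = s₂.B i ∧ s₁.n i = s₂.n i :=
    Prod.ext_iff.mp (h.slot_eq i (hj ▸ hi))
  simp only [advanceState, ← h.c_eq, h.r_eq, hy, hk, ExState.mk.injEq, true_and, and_true]
  refine ⟨funext fun i => ?_, funext fun i => ?_⟩ <;> by_cases hi : i = s₁.c + 1
  · simp [hi]
  · simp [Function.update_of_ne hi, (hslot i hi).1]
  · simp [hi]
  · simp [Function.update_of_ne hi, (hslot i hi).2]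

end Coupled

lemma Coupled.exP_le (hε : 0 ≤ ε) (hκ : ∀ q, HasDP ε (κ q)) {j : Fin t}
    {s₁ s₂ : ExState D Q R t} (h : Coupled j s₁ s₂) (i : List (D ⊕ Q)) (e : List (Q ⊕ R)) :
    exP v κ s₁ i e ≤ Real.exp (2 * answersLeft s₁ j * ε) * exP v κ s₂ i e := by
  have hexp (a : ℕ) : 1 ≤ Real.exp (2 * a * ε) := Real.one_le_exp (by positivity)
  have hrhs (a : ℕ) (s : ExState D Q R t) (i e) : 0 ≤ Real.exp (2 * a * ε) * exP v κ s i e :=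
    mul_nonneg (Real.exp_nonneg _) (exP_nonneg v κ s i e)
  induction s₁, i, e using exP.induct (t := t) v generalizing s₂ with
  | case1 s i => simpa [exP_nil] using hexp _
  | case2 s i e hpc ih =>
    have hpc₂ : s₂.pc16 := h.pc16_eq ▸ hpc
    rw [exP_output v κ hpc, if_pos rfl, exP_output v κ hpc₂, if_pos h.r_eq]
    by_cases hj : j = s.c + 1
    · rw [h.advance_eq hpc hj]
      exact le_mul_of_one_le_left (exP_nonneg v κ _ i e) (hexp _)
    · rw [← answersLeft_advanceState hpc hj]
      exact ih (h.advance hj)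
  | case3 s i e hpc r hr => simpa [exP_output v κ hpc, hr] using hrhs _ s₂ i _
  | case4 s i e hpc q => simpa [exP_output_query v κ hpc] using hrhs _ s₂ i _
  | case5 s x e hpc => simpa [exP_input_nil v κ hpc] using hrhs _ s₂ [] _
  | case6 s x e hpc d i ih =>
    have hpc₂ : ¬s₂.pc16 := h.pc16_eq ▸ hpc
    rw [exP_data v κ hpc, exP_data v κ hpc₂, ← answersLeft_addOrDrop hpc d]
    exact ih (h.receive d)
  | case7 s e hpc i q ih =>
    have hpc₂ : ¬s₂.pc16 := h.pc16_eq ▸ hpc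
    rw [exP_query v κ hpc, if_pos rfl, exP_query v κ hpc₂, if_pos rfl]
    refine tsum_le_mul_tsum ((κ q).summable_mul _ fun r => exP_mem_Icc v κ _ i e)
      ((κ q).summable_mul _ fun r => exP_mem_Icc v κ _ i e) fun r => ?_
    calc (κ q).f (totalB s) r * exP v κ (answerState s q r) i e
        ≤ (Real.exp (2 * ε) * (κ q).f (totalB s₂) r) *
            (Real.exp (2 * answersLeft (answerState s q r) j * ε) *
              exP v κ (answerState s₂ q r) i e) :=
          mul_le_mul (h.apply_totalB_le (hκ q) r) (ih r (h.answer q r))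
            (exP_nonneg v κ _ i e) (mul_nonneg (Real.exp_nonneg _) ((κ q).nonneg _ _))
      _ = Real.exp (2 * answersLeft s j * ε) *
            ((κ q).f (totalB s₂) r * exP v κ (answerState s₂ q r) i e) := by
        rw [← answersLeft_answerState hpc q r j, Nat.cast_succ,
          show 2 * ((answersLeft (answerState s q r) j : ℝ) + 1) * ε =
            2 * ε + 2 * answersLeft (answerState s q r) j * ε by ring, Real.exp_add]
        ring
  | case8 s e hpc q i q' hq => simpa [exP_query v κ hpc, hq] using hrhs _ s₂ _ _
  | case9 s e hpc q i r => simpa [exP_query_response v κ hpc] using hrhs _ s₂ _ _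

lemma Coupled.exP_le' (hε : 0 ≤ ε) (hκ : ∀ q, HasDP ε (κ q)) {j : Fin t}
    {s₁ s₂ : ExState D Q R t} (h : Coupled j s₁ s₂) (i : List (D ⊕ Q)) (e : List (Q ⊕ R)) :
    exP v κ s₁ i e ≤ Real.exp (2 * t * ε) * exP v κ s₂ i e := by
  refine (h.exP_le hε hκ i e).trans ?_
  gcongr
  exacts [exP_nonneg v κ _ _ _, answersLeft_le _ _]

/-- Output steps are the same on both sides, so it suffices to compare states awaiting input. -/
lemma exP_le_mul_of_forall_input {i₁ i₂ : List (D ⊕ Q)} {C : ℝ} (hC : 1 ≤ C)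
    (h : ∀ s : ExState D Q R t, ¬s.pc16 → ∀ x e,
      exP v κ s i₁ (x :: e) ≤ C * exP v κ s i₂ (x :: e))
    (s : ExState D Q R t) (e : List (Q ⊕ R)) : exP v κ s i₁ e ≤ C * exP v κ s i₂ e := by
  induction e generalizing s with
  | nil => simpa [exP_nil] using hC
  | cons x e ih =>
    by_cases hpc : s.pc16
    · rcases x with q | r
      · simp [exP_output_query v κ hpc]
      · rw [exP_output v κ hpc, exP_output v κ hpc]
        split_ifs
        exacts [ih _, by simp]
    · exact h s hpc x e

lemma exP_cons_le_mul {i₁ i₂ : List (D ⊕ Q)} {C : ℝ} (hC : 1 ≤ C)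
    (h : ∀ (s : ExState D Q R t) e, exP v κ s i₁ e ≤ C * exP v κ s i₂ e) (y : D ⊕ Q)
    (s : ExState D Q R t) (e : List (Q ⊕ R)) :
    exP v κ s (y :: i₁) e ≤ C * exP v κ s (y :: i₂) e := by
  refine exP_le_mul_of_forall_input hC (fun s hpc x e => ?_) s e
  rcases y with d | q
  · rw [exP_data v κ hpc, exP_data v κ hpc]
    exact h _ _
  · rcases x with q' | r
    · rw [exP_query v κ hpc, exP_query v κ hpc]
      split_ifs
      · refine tsum_le_mul_tsum ((κ q).summable_mul _ fun r => exP_mem_Icc v κ _ _ e)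
          ((κ q).summable_mul _ fun r => exP_mem_Icc v κ _ _ e) fun r => ?_
        rw [mul_left_comm]
        exact mul_le_mul_of_nonneg_left (h _ _) ((κ q).nonneg _ _)
      · simp
    · simp [exP_query_response v κ hpc]

lemma exP_append_le_mul {i₁ i₂ : List (D ⊕ Q)} {C : ℝ} (hC : 1 ≤ C)
    (h : ∀ (s : ExState D Q R t) e, exP v κ s i₁ e ≤ C * exP v κ s i₂ e) (pre : List (D ⊕ Q))
    (s : ExState D Q R t) (e : List (Q ⊕ R)) :
    exP v κ s (pre ++ i₁) e ≤ C * exP v κ s (pre ++ i₂) e := by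
  induction pre generalizing s e with
  | nil => exact h s e
  | cons y pre ih => exact exP_cons_le_mul hC ih y s e

lemma exP_insert_le (hε : 0 ≤ ε) (hκ : ∀ q, HasDP ε (κ q)) (d : D) (i : List (D ⊕ Q))
    (s : ExState D Q R t) (e : List (Q ⊕ R)) :
    exP v κ s (Sum.inl d :: i) e ≤ Real.exp (2 * t * ε) * exP v κ s i e := by
  have hC : 1 ≤ Real.exp (2 * t * ε) := Real.one_le_exp (by positivity)
  refine exP_le_mul_of_forall_input hC (fun s hpc x e => ?_) s e
  rw [exP_data v κ hpc]
  exact (Coupled.receive_self hpc d).exP_le' hε hκ _ _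

lemma exP_le_insert (hε : 0 ≤ ε) (hκ : ∀ q, HasDP ε (κ q)) (d : D) (i : List (D ⊕ Q))
    (s : ExState D Q R t) (e : List (Q ⊕ R)) :
    exP v κ s i e ≤ Real.exp (2 * t * ε) * exP v κ s (Sum.inl d :: i) e := by
  have hC : 1 ≤ Real.exp (2 * t * ε) := Real.one_le_exp (by positivity)
  refine exP_le_mul_of_forall_input hC (fun s hpc x e => ?_) s e
  rw [exP_data v κ hpc]
  exact (Coupled.receive_self (v := v) hpc d).symm.exP_le' hε hκ _ _

lemma AdjOneIn.symm {i₁ i₂ : List (D ⊕ Q)} (h : AdjOneIn i₁ i₂) : AdjOneIn i₂ i₁ := by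
  rcases h with rfl | ⟨pre, post, d, h | h⟩
  exacts [Or.inl rfl, Or.inr ⟨pre, post, d, Or.inr h⟩, Or.inr ⟨pre, post, d, Or.inl h⟩]

lemma AdjOneIn.exP_le (hε : 0 ≤ ε) (hκ : ∀ q, HasDP ε (κ q)) {i₁ i₂ : List (D ⊕ Q)}
    (h : AdjOneIn i₁ i₂) (s : ExState D Q R t) (e : List (Q ⊕ R)) :
    exP v κ s i₁ e ≤ Real.exp (2 * t * ε) * exP v κ s i₂ e := by
  have hC : 1 ≤ Real.exp (2 * t * ε) := Real.one_le_exp (by positivity)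
  rcases h with rfl | ⟨pre, post, d, ⟨rfl, rfl⟩ | ⟨rfl, rfl⟩⟩
  · exact le_mul_of_one_le_left (exP_nonneg v κ s _ e) hC
  · exact exP_append_le_mul hC (exP_insert_le hε hκ d post) pre s e
  · exact exP_append_le_mul hC (exP_le_insert hε hκ d post) pre s e

theorem stmt14_general
    (t : ℕ) [NeZero t] (v : ℕ) (ε : ℝ) (hε : 0 ≤ ε)
    (κ : Q → SanFn D R) (hκ : ∀ q : Q, HasDP ε (κ q))
    (y₀ : D ⊕ Q) (r₀ : R) (k₀ : Q)
    (i₁ i₂ : List (D ⊕ Q)) (hadj : AdjOneIn i₁ i₂) (T : Set (List (Q ⊕ R))) :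
    exPSet v κ (initState (t := t) y₀ r₀ k₀) i₁ T
      ≤ Real.exp (2 * t * ε) * exPSet v κ (initState (t := t) y₀ r₀ k₀) i₂ T :=
  tsum_le_mul_tsum_of_le_of_le (fun e => exP_nonneg v κ _ i₁ e.1)
    (fun e => exP_nonneg v κ _ i₂ e.1) (fun e => hadj.exP_le hε hκ _ e.1)
    (fun e => hadj.symm.exP_le hε hκ _ e.1)

/-- if every sanitization function used by `M_ex1(K)` has
`ε`-differential privacy, then `M_ex1(K)` has `(2·t·ε)`-differential noninterference. -/
theorem stmt14 [Countable D] [Countable Q] [Countable R]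
    (t : ℕ) [NeZero t] (v : ℕ) (hv : 0 < v) (ε : ℝ) (hε : 0 ≤ ε)
    (κ : Q → SanFn D R) (hκ : ∀ q : Q, HasDP ε (κ q))
    (y₀ : D ⊕ Q) (r₀ : R) (k₀ : Q)
    (i₁ i₂ : List (D ⊕ Q)) (hadj : AdjOneIn i₁ i₂) (T : Set (List (Q ⊕ R))) :
    exPSet v κ (initState (t := t) y₀ r₀ k₀) i₁ T
      ≤ Real.exp (2 * t * ε) * exPSet v κ (initState (t := t) y₀ r₀ k₀) i₂ T :=
  stmt14_general t v ε hε κ hκ y₀ r₀ k₀ i₁ i₂ hadj T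
end

section
/- For all integers m > 0, all ε > 0, and all functions f from finite multisets over D to {−m,…,m} with positive sensitivity δ(f), the truncated geometric mechanism κ_{f,ε} has ε-differential privacy: for all multisets B₁ and B₂ differing on at most one element and all integers r, Pr[κ_{f,ε}(B₁) = r] ≤ e^ε · Pr[κ_{f,ε}(B₂) = r]. -/
/-!
For an output `r`, the truncated geometric mass `N(m, t, p)` at `r - t` factors as
`p ^ |r - t|` times a weight that depends only on `r`. Moving `t` by at most `Δ`
changes the exponent `|r - t|` by at most `Δ`, and with `p = e^{-ε/Δ}` this costs a
factor of at most `p ^ (-Δ) = e^ε`.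
-/

/-- The probability mass function of the truncated geometric noise distribution
`N(m, t, p)` at `n`. -/
noncomputable def trGeoPMF (m t : ℤ) (p : ℝ) (n : ℤ) : ℝ :=
  if |t + n| = m then p ^ n.natAbs * (1 / (1 + p))
  else if -m < t + n ∧ t + n < m then p ^ n.natAbs * ((1 - p) / (1 + p))
  else 0

noncomputable def trGeoWeight (m : ℤ) (p : ℝ) (r : ℤ) : ℝ :=
  if |r| = m then 1 / (1 + p)
  else if -m < r ∧ r < m then (1 - p) / (1 + p)
  else 0

lemma trGeoWeight_nonneg (m : ℤ) {p : ℝ} (hp₀ : 0 ≤ p) (hp₁ : p ≤ 1) (r : ℤ) :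
    0 ≤ trGeoWeight m p r := by
  unfold trGeoWeight
  split_ifs
  · positivity
  · exact div_nonneg (sub_nonneg.mpr hp₁) (by positivity)
  · rfl

lemma trGeoPMF_sub_eq (m t : ℤ) (p : ℝ) (r : ℤ) :
    trGeoPMF m t p (r - t) = p ^ (r - t).natAbs * trGeoWeight m p r := by
  unfold trGeoPMF trGeoWeight
  rw [add_sub_cancel]
  split_ifs <;> simp

lemma exp_neg_div_pow_le_exp_mul_pow {ε Δ : ℝ} (hε : 0 ≤ ε) (hΔ : 0 < Δ) {a b : ℕ}
    (hab : (b : ℝ) ≤ a + Δ) :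
    Real.exp (-ε / Δ) ^ a ≤ Real.exp ε * Real.exp (-ε / Δ) ^ b := by
  rw [← Real.exp_nat_mul, ← Real.exp_nat_mul, ← Real.exp_add, Real.exp_le_exp,
    mul_div_assoc', mul_div_assoc', ← sub_nonneg, add_div' _ _ _ hΔ.ne', ← sub_div]
  have : (b - a) * ε ≤ Δ * ε := mul_le_mul_of_nonneg_right (by linarith) hε
  exact div_nonneg (by linarith) hΔ.le

lemma natAbs_sub_le_natAbs_sub_add {r t₁ t₂ Δ : ℤ} (h : |t₁ - t₂| ≤ Δ) :
    ((r - t₂).natAbs : ℝ) ≤ (r - t₁).natAbs + (Δ : ℝ) := by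
  simp only [Nat.cast_natAbs, Int.cast_abs]
  exact_mod_cast (abs_sub_le r t₁ t₂).trans (add_le_add_right h _)

theorem stmt15_general {D : Type} (m : ℤ) (ε : ℝ) (hε : 0 < ε)
    (f : Multiset D → ℤ)
    (Δ : ℤ) (hΔ : 0 < Δ)
    (hsens : ∀ B₁ B₂ : Multiset D, MSAdj B₁ B₂ → |f B₁ - f B₂| ≤ Δ)
    (B₁ B₂ : Multiset D) (hadj : MSAdj B₁ B₂) (r : ℤ) :
    trGeoPMF m (f B₁) (Real.exp (-ε / (Δ : ℝ))) (r - f B₁)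
      ≤ Real.exp ε * trGeoPMF m (f B₂) (Real.exp (-ε / (Δ : ℝ))) (r - f B₂) := by
  have hΔ' : (0 : ℝ) < Δ := by exact_mod_cast hΔ
  have hp₁ : Real.exp (-ε / Δ) ≤ 1 :=
    Real.exp_le_one_iff.mpr (div_nonpos_of_nonpos_of_nonneg (by linarith) hΔ'.le)
  rw [trGeoPMF_sub_eq, trGeoPMF_sub_eq, ← mul_assoc]
  exact mul_le_mul_of_nonneg_right
    (exp_neg_div_pow_le_exp_mul_pow hε.le hΔ'
      (natAbs_sub_le_natAbs_sub_add (hsens B₁ B₂ hadj)))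
    (trGeoWeight_nonneg m (Real.exp_pos _).le hp₁ r)

/-- the truncated geometric mechanism `κ_{f,ε}` has `ε`-differential
privacy: `Pr[κ_{f,ε}(B₁) = r] ≤ e^ε · Pr[κ_{f,ε}(B₂) = r]`, where
`Pr[κ_{f,ε}(B) = r] = Pr[N(m, f(B), e^{-ε/δ(f)}) = r - f(B)]`. -/
theorem stmt15 {D : Type} [Countable D] (m : ℤ) (hm : 0 < m) (ε : ℝ) (hε : 0 < ε)
    (f : Multiset D → ℤ) (hf : ∀ B, -m ≤ f B ∧ f B ≤ m)
    (Δ : ℤ) (hΔ : 0 < Δ)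
    (hsens : ∀ B₁ B₂ : Multiset D, MSAdj B₁ B₂ → |f B₁ - f B₂| ≤ Δ)
    (B₁ B₂ : Multiset D) (hadj : MSAdj B₁ B₂) (r : ℤ) :
    trGeoPMF m (f B₁) (Real.exp (-ε / (Δ : ℝ))) (r - f B₁)
      ≤ Real.exp ε * trGeoPMF m (f B₂) (Real.exp (-ε / (Δ : ℝ))) (r - f B₂) :=
  stmt15_general m ε hε f Δ hΔ hsens B₁ B₂ hadj r
end

section
/- For all integers m > 0, all ε > 0, all functions f from finite multisets over D to {−m,…,m} with positive sensitivity δ(f), all multisets B, and all integers b ≥ 0: Pr[|κ_{f,ε}(B) − f(B)| ≥ b] ≤ 2p^b/(1+p), where p = e^{−ε/δ(f)}. -/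
/-! The noise `n` is supported on `[-m - t, m - t]`. An interior point carries mass
`p^|n| (1 - p)/(1 + p) = (p^|n| - p^(|n|+1))/(1 + p)` and an endpoint `p^|n|/(1 + p)`, so for
`b ≥ 1` each one-sided tail `{n ≥ b}`, `{n ≤ -b}` telescopes to at most `p^b/(1 + p)`. For `b = 0`
the same telescoping shows that the total mass is `1 ≤ 2/(1 + p)`. -/

open Finset

lemma tsum_subtype_eq_sum_filter {α M : Type*} [AddCommMonoid M] [TopologicalSpace M]
    (P : α → Prop) [DecidablePred P] (g : α → M)
    (s : Finset α) (hg : ∀ x ∉ s, g x = 0) :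
    ∑' x : {x // P x}, g x = ∑ x ∈ s.filter P, g x := by
  refine (tsum_subtype {x | P x} g).trans ?_
  rw [tsum_eq_sum (s := s), sum_filter]
  · simp only [Set.indicator_apply, Set.mem_ofPred_eq]
  · intro x hx
    simp [hg x hx]

section TruncatedGeometric

variable {m t : ℤ} {p : ℝ}

lemma trGeoPMF_eq_zero_of_notMem_Icc {n : ℤ} (hn : n ∉ Icc (-m - t) (m - t)) :
    trGeoPMF m t p n = 0 := by
  rw [mem_Icc] at hn
  unfold trGeoPMF
  rw [if_neg, if_neg] <;> grind

lemma trGeoPMF_neg (n : ℤ) : trGeoPMF m t p (-n) = trGeoPMF m (-t) p n := by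
  unfold trGeoPMF
  rw [show t + -n = -(-t + n) by ring, abs_neg, Int.natAbs_neg]
  simp only [show (-m < -(-t + n) ∧ -(-t + n) < m) ↔ (-m < -t + n ∧ -t + n < m) by omega]

lemma sum_Icc_trGeoPMF (ht : -m ≤ t) {b : ℤ} (hb : 1 ≤ b) (hbt : b ≤ m - t) :
    ∑ n ∈ Icc b (m - t), trGeoPMF m t p n = p ^ b.natAbs / (1 + p) := by
  induction b, hbt using Int.leInductionDown with
  | base =>
    rw [Icc_self, sum_singleton, trGeoPMF,
      if_pos (by rw [add_sub_cancel]; exact abs_of_pos (by omega))]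
    ring
  | pred b hbt ih =>
    rw [← insert_Icc_add_one_left_eq_Icc (by omega), sub_add_cancel, sum_insert (by simp),
      ih (by omega), trGeoPMF, if_neg (by grind), if_pos (by omega),
      show b.natAbs = (b - 1).natAbs + 1 by omega, pow_succ]
    ring

lemma sum_Icc_trGeoPMF_le (hp : 0 ≤ p) (ht : -m ≤ t) {b : ℕ} (hb : 1 ≤ b) :
    ∑ n ∈ Icc (b : ℤ) (m - t), trGeoPMF m t p n ≤ p ^ b / (1 + p) := by
  by_cases hbt : (b : ℤ) ≤ m - t
  · rw [sum_Icc_trGeoPMF ht (by omega) hbt, Int.natAbs_natCast]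
  · rw [Icc_eq_empty hbt, sum_empty]
    positivity

lemma sum_Icc_neg_trGeoPMF (a c : ℤ) :
    ∑ n ∈ Icc (-c) (-a), trGeoPMF m t p n = ∑ n ∈ Icc a c, trGeoPMF m (-t) p n := by
  refine sum_nbij' (fun n => -n) (fun n => -n) ?_ ?_ (by simp) (by simp) fun n _ => ?_
  · intro n; simp only [mem_Icc]; omega
  · intro n; simp only [mem_Icc]; omega
  · rw [← trGeoPMF_neg, neg_neg]

lemma sum_trGeoPMF_eq_one (hm : 0 < m) (ht : -m ≤ t ∧ t ≤ m) (hp : 1 + p ≠ 0) :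
    ∑ n ∈ Icc (-m - t) (m - t), trGeoPMF m t p n = 1 := by
  have hsplit : Icc (-m - t) (m - t) = insert 0 (Icc (-(m - -t)) (-1) ∪ Icc 1 (m - t)) := by
    ext n; simp only [mem_insert, mem_union, mem_Icc]; omega
  rw [hsplit, sum_insert (by simp), sum_union (disjoint_left.2 (by simp only [mem_Icc]; omega)),
    sum_Icc_neg_trGeoPMF]
  obtain ⟨htl, htu⟩ := ht
  rcases htu.eq_or_lt with rfl | htu
  · rw [sub_self, Icc_eq_empty_of_lt zero_lt_one, sum_empty,
      sum_Icc_trGeoPMF (by omega) le_rfl (by omega),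
      trGeoPMF, if_pos (by simp [hm.le])]
    field_simp
    simp
  rcases htl.eq_or_lt with rfl | htl
  · rw [neg_neg, sub_self, Icc_eq_empty_of_lt zero_lt_one, sum_empty,
      sum_Icc_trGeoPMF le_rfl le_rfl (by omega), trGeoPMF, if_pos (by simp [hm.le])]
    field_simp
    simp
  · rw [sum_Icc_trGeoPMF (by omega) le_rfl (by omega),
      sum_Icc_trGeoPMF (by omega) le_rfl (by omega), trGeoPMF, if_neg (by grind), if_pos (by omega)]
    field_simp
    simp
    ring

lemma tsum_trGeoPMF_abs_ge_le (hm : 0 < m) (ht : -m ≤ t ∧ t ≤ m) (hp0 : 0 ≤ p) (hp1 : p ≤ 1)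
    (b : ℕ) :
    ∑' n : {n : ℤ // (b : ℤ) ≤ |n|}, trGeoPMF m t p n ≤ 2 * p ^ b / (1 + p) := by
  have h1p : 0 < 1 + p := by linarith
  rw [tsum_subtype_eq_sum_filter _ _ _ fun n hn => trGeoPMF_eq_zero_of_notMem_Icc hn]
  rcases b.eq_zero_or_pos with rfl | hb
  · rw [filter_true_of_mem fun n _ => by simp, sum_trGeoPMF_eq_one hm ht h1p.ne', pow_zero,
      le_div_iff₀ h1p]
    linarith
  have hsplit : (Icc (-m - t) (m - t)).filter (fun n => (b : ℤ) ≤ |n|) =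
      Icc (b : ℤ) (m - t) ∪ Icc (-(m - -t)) (-b) := by
    ext n; simp only [mem_filter, mem_union, mem_Icc, le_abs']; omega
  calc _ = ∑ n ∈ Icc (b : ℤ) (m - t), trGeoPMF m t p n
        + ∑ n ∈ Icc (-(m - -t)) (-b), trGeoPMF m t p n := by
        rw [hsplit, sum_union (disjoint_left.2 (by simp only [mem_Icc]; omega))]
    _ ≤ p ^ b / (1 + p) + p ^ b / (1 + p) := by
        rw [sum_Icc_neg_trGeoPMF]
        exact add_le_add (sum_Icc_trGeoPMF_le hp0 ht.1 hb)
          (sum_Icc_trGeoPMF_le hp0 (by omega) hb)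
    _ = 2 * p ^ b / (1 + p) := by ring

end TruncatedGeometric

theorem stmt16_general {D : Type} (m : ℤ) (hm : 0 < m) (ε : ℝ) (hε : 0 < ε)
    (f : Multiset D → ℤ) (hf : ∀ B, -m ≤ f B ∧ f B ≤ m)
    (Δ : ℤ) (hΔ : 0 < Δ)
    (B : Multiset D) (b : ℕ) :
    (∑' n : {n : ℤ // (b : ℤ) ≤ |n|}, trGeoPMF m (f B) (Real.exp (-ε / (Δ : ℝ))) n.1)
      ≤ 2 * Real.exp (-ε / (Δ : ℝ)) ^ b / (1 + Real.exp (-ε / (Δ : ℝ))) := by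
  have hp1 : Real.exp (-ε / Δ) ≤ 1 :=
    Real.exp_le_one_iff.2 (div_nonpos_of_nonpos_of_nonneg (by linarith) (by positivity))
  exact tsum_trGeoPMF_abs_ge_le hm (hf B) (Real.exp_pos _).le hp1 b

/-- Utility: `Pr[|κ_{f,ε}(B) − f(B)| ≥ b] ≤ 2p^b/(1+p)` where
`p = e^{−ε/δ(f)}` and `Pr[|κ_{f,ε}(B) − f(B)| ≥ b]` is the sum over all noise
values `n` with `|n| ≥ b` of `Pr[N(m, f(B), p) = n]`. -/
theorem stmt16 {D : Type} [Countable D] (m : ℤ) (hm : 0 < m) (ε : ℝ) (hε : 0 < ε)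
    (f : Multiset D → ℤ) (hf : ∀ B, -m ≤ f B ∧ f B ≤ m)
    (Δ : ℤ) (hΔ : 0 < Δ)
    (hsens : ∀ B₁ B₂ : Multiset D, MSAdj B₁ B₂ → |f B₁ - f B₂| ≤ Δ)
    (B : Multiset D) (b : ℕ) :
    (∑' n : {n : ℤ // (b : ℤ) ≤ |n|}, trGeoPMF m (f B) (Real.exp (-ε / (Δ : ℝ))) n.1)
      ≤ 2 * Real.exp (-ε / (Δ : ℝ)) ^ b / (1 + Real.exp (-ε / (Δ : ℝ))) :=
  stmt16_general m hm ε hε f hf Δ hΔ B b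
end
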